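/- arXiv:2509.16541 — 5 statements merged into one kernel-verified Lean document; each statement's English description precedes it below -/
import Mathlib

section
/- Let ε > 0 and let A_1, …, A_I be events in a probability space such that P(A_i ∩ A_j) ≤ P(A_i)·P(A_j)·(1+ε) for all i ≠ j, and ∑_i P(A_i) ≥ 1/ε. Then P(⋃_i A_i) ≥ 1 − 2ε. -/
open MeasureTheory
open scoped ENNReal

/-!
Second moment method. With `X = ∑ᵢ 1_{Aᵢ}` and `U = ⋃ᵢ Aᵢ`, we have `X = X · 1_U`, so Cauchy–Schwarz
gives the Chung–Erdős inequality `(E X)² ≤ P(U) · E X²`. Here `E X = S := ∑ᵢ P(Aᵢ)` and near pairwise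
independence gives `E X² = ∑ᵢⱼ P(Aᵢ ∩ Aⱼ) ≤ S + (1 + ε) S²`, hence
`P(U) ≥ 1 / (1/S + 1 + ε) ≥ 1 / (1 + 2ε) ≥ 1 - 2ε` since `1/S ≤ ε`.
-/

namespace MeasureTheory

variable {α ι : Type*} [MeasurableSpace α] {μ : Measure α}

theorem sq_lintegral_mul_le {f g : α → ℝ≥0∞} (hf : AEMeasurable f μ) (hg : AEMeasurable g μ) :
    (∫⁻ a, f a * g a ∂μ) ^ 2 ≤ (∫⁻ a, f a ^ 2 ∂μ) * ∫⁻ a, g a ^ 2 ∂μ := by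
  have h := ENNReal.lintegral_mul_le_Lp_mul_Lq μ Real.HolderConjugate.two_two hf hg
  simp only [ENNReal.rpow_two] at h
  calc (∫⁻ a, f a * g a ∂μ) ^ 2
      ≤ ((∫⁻ a, f a ^ 2 ∂μ) ^ (1 / 2 : ℝ) * (∫⁻ a, g a ^ 2 ∂μ) ^ (1 / 2 : ℝ)) ^ 2 := by
        gcongr; exact h
    _ = (∫⁻ a, f a ^ 2 ∂μ) * ∫⁻ a, g a ^ 2 ∂μ := by
      rw [mul_pow, ← ENNReal.rpow_natCast, ← ENNReal.rpow_natCast, ← ENNReal.rpow_mul,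
        ← ENNReal.rpow_mul]
      norm_num

variable [Fintype ι] {A : ι → Set α}

theorem sq_sum_measure_le_measure_iUnion_mul (hA : ∀ i, MeasurableSet (A i)) :
    (∑ i, μ (A i)) ^ 2 ≤ μ (⋃ i, A i) * ∑ i, ∑ j, μ (A i ∩ A j) := by
  set U := ⋃ i, A i
  set X : α → ℝ≥0∞ := fun a => ∑ i, (A i).indicator 1 a
  have hXm : Measurable X := Finset.measurable_sum _ fun i _ => measurable_one.indicator (hA i)
  have hUm : MeasurableSet U := MeasurableSet.iUnion hA
  have hX1 : ∫⁻ a, X a ∂μ = ∑ i, μ (A i) := by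
    rw [lintegral_finsetSum _ fun i _ => measurable_one.indicator (hA i)]
    simp [lintegral_indicator_one (hA _)]
  have hX2 : ∫⁻ a, X a ^ 2 ∂μ = ∑ i, ∑ j, μ (A i ∩ A j) := by
    have hsq : ∀ a, X a ^ 2 = ∑ i, ∑ j, (A i ∩ A j).indicator 1 a := fun a => by
      simp [X, sq, Finset.sum_mul_sum, Set.inter_indicator_one]
    simp only [hsq]
    rw [lintegral_finsetSum _ fun i _ => Finset.measurable_sum _ fun j _ =>
      measurable_one.indicator ((hA i).inter (hA j))]
    refine Finset.sum_congr rfl fun i _ => ?_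
    rw [lintegral_finsetSum _ fun j _ => measurable_one.indicator ((hA i).inter (hA j))]
    simp [lintegral_indicator_one ((hA i).inter (hA _))]
  have hXU : ∀ a, X a * U.indicator 1 a = X a := by
    intro a
    by_cases ha : a ∈ U
    · simp [ha]
    · simp_all [X, U]
  have hU : ∫⁻ a, U.indicator 1 a ^ 2 ∂μ = μ U := by
    rw [← lintegral_indicator_one hUm]
    congr with a
    by_cases ha : a ∈ U <;> simp [ha]
  have := sq_lintegral_mul_le (μ := μ) hXm.aemeasurable (measurable_one.indicator hUm).aemeasurable
  simp only [hXU, hX1, hX2, hU] at this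
  rwa [mul_comm]

theorem sq_sum_measureReal_le_measureReal_iUnion_mul [IsFiniteMeasure μ]
    (hA : ∀ i, MeasurableSet (A i)) :
    (∑ i, μ.real (A i)) ^ 2 ≤ μ.real (⋃ i, A i) * ∑ i, ∑ j, μ.real (A i ∩ A j) := by
  have h := ENNReal.toReal_mono (by simp [ENNReal.mul_eq_top])
    (sq_sum_measure_le_measure_iUnion_mul (μ := μ) hA)
  simpa [ENNReal.toReal_sum, measureReal_def] using h

theorem sum_sum_measureReal_inter_le {c : ℝ} (hc : 0 ≤ c)
    (hpair : ∀ i j, i ≠ j → μ.real (A i ∩ A j) ≤ μ.real (A i) * μ.real (A j) * c) :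
    ∑ i, ∑ j, μ.real (A i ∩ A j) ≤ ∑ i, μ.real (A i) + c * (∑ i, μ.real (A i)) ^ 2 := by
  classical
  have hbound : ∀ i j, μ.real (A i ∩ A j) ≤
      μ.real (A i) * μ.real (A j) * c + if i = j then μ.real (A i) else 0 := by
    intro i j
    by_cases hij : i = j
    · subst hij
      simp only [Set.inter_self, if_true]
      nlinarith [measureReal_nonneg (μ := μ) (s := A i)]
    · simpa [hij] using hpair i j hij
  calc ∑ i, ∑ j, μ.real (A i ∩ A j)
      ≤ ∑ i, ∑ j, (μ.real (A i) * μ.real (A j) * c + if i = j then μ.real (A i) else 0) :=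
        Finset.sum_le_sum fun i _ => Finset.sum_le_sum fun j _ => hbound i j
    _ = ∑ i, μ.real (A i) + c * (∑ i, μ.real (A i)) ^ 2 := by
      simp only [Finset.sum_add_distrib, Finset.sum_ite_eq, Finset.mem_univ, if_true, sq,
        ← Finset.sum_mul, Finset.sum_mul_sum]
      ring

end MeasureTheory

theorem one_sub_two_mul_le_of_sq_le_mul {ε s u : ℝ} (hε : 0 < ε) (hs : 1 ≤ ε * s)
    (h : s ^ 2 ≤ u * (s + (1 + ε) * s ^ 2)) : 1 - 2 * ε ≤ u := by
  have hs0 : 0 < s := by nlinarith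
  by_contra! hu
  nlinarith [mul_lt_mul_of_pos_right hu (by positivity : 0 < s + (1 + ε) * s ^ 2)]

/-- Second moment method lemma: if events are pairwise nearly independent
(`P(A_i ∩ A_j) ≤ P(A_i)P(A_j)(1+ε)` for `i ≠ j`) and `∑ P(A_i) ≥ 1/ε`, then
`P(⋃ A_i) ≥ 1 - 2ε`. -/
theorem stmt0 {Ω : Type*} [MeasurableSpace Ω] (μ : Measure Ω) [IsProbabilityMeasure μ]
    (ε : ℝ) (hε : 0 < ε) (I : ℕ) (A : Fin I → Set Ω)
    (hmeas : ∀ i, MeasurableSet (A i))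
    (hpair : ∀ i j, i ≠ j →
      (μ (A i ∩ A j)).toReal ≤ (μ (A i)).toReal * (μ (A j)).toReal * (1 + ε))
    (hsum : 1 / ε ≤ ∑ i, (μ (A i)).toReal) :
    1 - 2 * ε ≤ (μ (⋃ i, A i)).toReal := by
  simp only [← measureReal_def] at hpair hsum ⊢
  have hεS : 1 ≤ ε * ∑ i, μ.real (A i) := by
    rwa [div_le_iff₀ hε, mul_comm] at hsum
  refine one_sub_two_mul_le_of_sq_le_mul hε hεS ?_
  calc (∑ i, μ.real (A i)) ^ 2
      ≤ μ.real (⋃ i, A i) * ∑ i, ∑ j, μ.real (A i ∩ A j) :=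
        sq_sum_measureReal_le_measureReal_iUnion_mul hmeas
    _ ≤ μ.real (⋃ i, A i) * (∑ i, μ.real (A i) + (1 + ε) * (∑ i, μ.real (A i)) ^ 2) := by
        gcongr
        exact sum_sum_measureReal_inter_le (by linarith) hpair
end

section
/- For every p ∈ (0,1), the infinite product ∏_{j=1}^∞ (1 − (1−p)^j)² is at least exp(−π²/(3p)). -/
/-!
Write `q = 1 - p`. Expanding `-log (1 - x) = ∑ₙ xⁿ / n` and summing the resulting double series
in the other order turns `∑ⱼ -log (1 - qʲ)` into the Lambert series `∑ₙ qⁿ / (n (1 - qⁿ))`.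
Since `1 - qⁿ = p (1 + q + ⋯ + qⁿ⁻¹) ≥ n p qⁿ⁻¹`, its terms are at most `1 / (p n²)`, so the sum is
at most `ζ(2) / p = π² / (6p)`, and the product is `exp (-2 ∑ⱼ -log (1 - qʲ)) ≥ exp (-π² / (3p))`.
-/

open Real Finset

theorem hasSum_one_div_succ_sq : HasSum (fun n : ℕ => 1 / ((n : ℝ) + 1) ^ 2) (π ^ 2 / 6) := by
  simpa using (hasSum_nat_add_iff' 1).mpr hasSum_zeta_two

section

variable {q : ℝ}

theorem succ_mul_one_sub_mul_pow_le_one_sub_pow (hq0 : 0 ≤ q) (hq1 : q ≤ 1) (n : ℕ) :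
    (n + 1) * (1 - q) * q ^ n ≤ 1 - q ^ (n + 1) := by
  have hsum : (n + 1) * q ^ n ≤ ∑ i ∈ range (n + 1), q ^ i :=
    calc ((n : ℝ) + 1) * q ^ n = ∑ _i ∈ range (n + 1), q ^ n := by simp
      _ ≤ ∑ i ∈ range (n + 1), q ^ i := sum_le_sum fun i hi =>
          pow_le_pow_of_le_one hq0 hq1 (Nat.lt_succ_iff.mp (mem_range.mp hi))
  rw [← geom_sum_mul_of_le_one hq1]
  nlinarith [sub_nonneg.2 hq1]

theorem pow_div_succ_mul_one_sub_pow_le (hq0 : 0 ≤ q) (hq1 : q < 1) (n : ℕ) :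
    q ^ (n + 1) / ((n + 1) * (1 - q ^ (n + 1))) ≤ 1 / ((1 - q) * (n + 1) ^ 2) := by
  have hden : 0 < 1 - q ^ (n + 1) := sub_pos.2 (pow_lt_one₀ hq0 hq1 n.succ_ne_zero)
  have hkey := succ_mul_one_sub_mul_pow_le_one_sub_pow hq0 hq1.le n
  have hmono : q ^ (n + 1) ≤ q ^ n := pow_le_pow_of_le_one hq0 hq1.le n.le_succ
  have hq : 0 < 1 - q := sub_pos.2 hq1
  rw [div_le_div_iff₀ (by positivity) (by positivity)]
  nlinarith [mul_le_mul_of_nonneg_left hkey (by positivity : (0 : ℝ) ≤ n + 1),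
    mul_le_mul_of_nonneg_left hmono (by positivity : (0 : ℝ) ≤ (1 - q) * (n + 1) ^ 2)]

theorem summable_pow_succ_pow_succ_div (hq0 : 0 ≤ q) (hq1 : q < 1) :
    Summable fun x : ℕ × ℕ => (q ^ (x.2 + 1)) ^ (x.1 + 1) / (x.1 + 1) := by
  have hgeom := summable_geometric_of_lt_one hq0 hq1
  refine .of_nonneg_of_le (fun x => by positivity) (fun x => ?_)
    (hgeom.mul_of_nonneg hgeom (fun n => by positivity) (fun n => by positivity))
  calc (q ^ (x.2 + 1)) ^ (x.1 + 1) / (x.1 + 1) ≤ (q ^ (x.2 + 1)) ^ (x.1 + 1) :=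
        div_le_self (by positivity) (le_add_of_nonneg_left (Nat.cast_nonneg _))
    _ = q ^ ((x.2 + 1) * (x.1 + 1)) := (pow_mul _ _ _).symm
    _ ≤ q ^ (x.1 + x.2) := pow_le_pow_of_le_one hq0 hq1.le (by nlinarith)
    _ = q ^ x.1 * q ^ x.2 := pow_add _ _ _

theorem hasSum_pow_succ_pow_succ_div (hq0 : 0 ≤ q) (hq1 : q < 1) (n : ℕ) :
    HasSum (fun j : ℕ => (q ^ (j + 1)) ^ (n + 1) / (n + 1))
      (q ^ (n + 1) / ((n + 1) * (1 - q ^ (n + 1)))) := by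
  have hgeom := (hasSum_geometric_of_lt_one (pow_nonneg hq0 (n + 1))
    (pow_lt_one₀ hq0 hq1 n.succ_ne_zero)).mul_left (q ^ (n + 1) / (n + 1))
  have hterm (j : ℕ) :
      (q ^ (j + 1)) ^ (n + 1) / (n + 1) = q ^ (n + 1) / (n + 1) * (q ^ (n + 1)) ^ j := by
    rw [← pow_mul, mul_comm, pow_mul]
    ring
  rw [← div_eq_mul_inv, div_div] at hgeom
  simpa only [hterm] using hgeom

theorem hasSum_neg_log_one_sub_pow (hq0 : 0 ≤ q) (hq1 : q < 1) :
    HasSum (fun j : ℕ => -log (1 - q ^ (j + 1)))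
      (∑' n : ℕ, q ^ (n + 1) / ((n + 1) * (1 - q ^ (n + 1)))) := by
  obtain ⟨a, ha⟩ := summable_pow_succ_pow_succ_div hq0 hq1
  have hcols := ha.prod_fiberwise (hasSum_pow_succ_pow_succ_div hq0 hq1)
  have hrows := ((Equiv.prodComm ℕ ℕ).hasSum_iff.2 ha).prod_fiberwise fun j =>
    hasSum_pow_div_log_of_abs_lt_one (x := q ^ (j + 1))
      (by rw [abs_of_nonneg (by positivity)]; exact pow_lt_one₀ hq0 hq1 j.succ_ne_zero)
  rwa [hcols.tsum_eq]

theorem tsum_neg_log_one_sub_pow_le (hq0 : 0 ≤ q) (hq1 : q < 1) :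
    ∑' j : ℕ, -log (1 - q ^ (j + 1)) ≤ π ^ 2 / (6 * (1 - q)) := by
  have hbound := hasSum_one_div_succ_sq.mul_left (1 / (1 - q))
  have hle (n : ℕ) := (pow_div_succ_mul_one_sub_pow_le hq0 hq1 n).trans_eq
    (one_div_mul_one_div _ _).symm
  have hpos (n : ℕ) : 0 < 1 - q ^ (n + 1) := sub_pos.2 (pow_lt_one₀ hq0 hq1 n.succ_ne_zero)
  rw [(hasSum_neg_log_one_sub_pow hq0 hq1).tsum_eq]
  calc ∑' n : ℕ, q ^ (n + 1) / ((n + 1) * (1 - q ^ (n + 1)))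
      ≤ ∑' n : ℕ, 1 / (1 - q) * (1 / ((n : ℝ) + 1) ^ 2) :=
        (hbound.summable.of_nonneg_of_le (fun n => by have := hpos n; positivity) hle).tsum_le_tsum
          hle hbound.summable
    _ = π ^ 2 / (6 * (1 - q)) := by rw [hbound.tsum_eq, one_div_mul_eq_div, div_div]

theorem tprod_one_sub_pow_sq (hq0 : 0 ≤ q) (hq1 : q < 1) :
    ∏' j : ℕ, (1 - q ^ (j + 1)) ^ 2 = exp (-2 * ∑' j : ℕ, -log (1 - q ^ (j + 1))) := by
  have hpos (j : ℕ) : 0 < 1 - q ^ (j + 1) := sub_pos.2 (pow_lt_one₀ hq0 hq1 j.succ_ne_zero)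
  have hlog (j : ℕ) : log ((1 - q ^ (j + 1)) ^ 2) = -2 * -log (1 - q ^ (j + 1)) := by
    rw [log_pow]; push_cast; ring
  rw [← rexp_tsum_eq_tprod (fun j => pow_pos (hpos j) 2), ← tsum_mul_left]
  · simp only [hlog]
  · simpa only [hlog] using (hasSum_neg_log_one_sub_pow hq0 hq1).summable.mul_left (-2)

end

/-- For `p ∈ (0,1)`, `∏_{j=1}^∞ (1 - (1-p)^j)² ≥ exp(-π²/(3p))`. -/
theorem stmt2 (p : ℝ) (hp0 : 0 < p) (hp1 : p < 1) :
    Real.exp (-(Real.pi ^ 2) / (3 * p)) ≤ ∏' j : ℕ, (1 - (1 - p) ^ (j + 1)) ^ 2 := by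
  have hsum := tsum_neg_log_one_sub_pow_le (q := 1 - p) (by linarith) (by linarith)
  rw [sub_sub_cancel] at hsum
  rw [tprod_one_sub_pow_sq (by linarith) (by linarith), exp_le_exp]
  calc -(π ^ 2) / (3 * p) = -2 * (π ^ 2 / (6 * p)) := by ring
    _ ≤ _ := by linarith
end

section
/- In the modified two-stage bootstrap percolation dynamics on ℤ², suppose at some time t a vertex x has state 0 and both its left neighbor and its right neighbor have state 2, with all vertices strictly between two state-2 vertices in the same row as x being in state 0. Then x remains in state 0 at all times t' ≥ t. -/
/-- The four nearest neighbors of a vertex of `ℤ²`. -/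
def neighbors (v : ℤ × ℤ) : List (ℤ × ℤ) :=
  [(v.1 + 1, v.2), (v.1 - 1, v.2), (v.1, v.2 + 1), (v.1, v.2 - 1)]

/-- One step of the modified two-stage bootstrap percolation on `ℤ²`:
a 0 becomes 1 iff it has a horizontal state-1 neighbor and a vertical state-1 neighbor;
a 1 becomes 2 iff at least two of its four nearest neighbors are in state 2;
state 2 is permanent. -/
def mstep (ξ : ℤ × ℤ → Fin 3) : ℤ × ℤ → Fin 3 := fun v =>
  if ξ v = 0 then
    (if (ξ (v.1 + 1, v.2) = 1 ∨ ξ (v.1 - 1, v.2) = 1) ∧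
        (ξ (v.1, v.2 + 1) = 1 ∨ ξ (v.1, v.2 - 1) = 1) then 1 else 0)
  else if ξ v = 1 then
    (if 2 ≤ (neighbors v).countP (fun w => decide (ξ w = 2)) then 2 else 1)
  else 2

lemma mstep_two (ξ : ℤ × ℤ → Fin 3) (v : ℤ × ℤ) (h : ξ v = 2) : mstep ξ v = 2 := by
  simp [mstep, h]

/-- In the modified variant, a state-0 vertex whose left and right neighbors are both in
state 2 (a blocking 0) remains in state 0 forever. -/
theorem stmt9 (ξ : ℕ → ℤ × ℤ → Fin 3) (hdyn : ∀ t, ξ (t + 1) = mstep (ξ t))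
    (t : ℕ) (x : ℤ × ℤ)
    (h0 : ξ t x = 0)
    (hleft : ξ t (x.1 - 1, x.2) = 2) (hright : ξ t (x.1 + 1, x.2) = 2) :
    ∀ t', t ≤ t' → ξ t' x = 0 := by
  have key : ∀ t', t ≤ t' → ξ t' x = 0 ∧ ξ t' (x.1 - 1, x.2) = 2 ∧ ξ t' (x.1 + 1, x.2) = 2 := by
    intro t' ht
    induction t' with
    | zero =>
        have : t = 0 := Nat.le_zero.mp ht
        subst this; exact ⟨h0, hleft, hright⟩
    | succ n ih =>
        rcases Nat.lt_or_ge t (n + 1) with h | h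
        · have hn := ih (Nat.lt_succ_iff.mp h)
          obtain ⟨h0', hl', hr'⟩ := hn
          refine ⟨?_, ?_, ?_⟩
          · rw [hdyn n]
            simp [mstep, h0', hl', hr']
          · rw [hdyn n]; exact mstep_two _ _ hl'
          · rw [hdyn n]; exact mstep_two _ _ hr'
        · have : t = n + 1 := le_antisymm ht h
          subst this; exact ⟨h0, hleft, hright⟩
  exact fun t' ht => (key t' ht).1
end

section
/- (Aizenman–Lebowitz scaling) Suppose a finite square box B ⊂ ℤ² initially contains only vertices in states 1 and 2, and run threshold-2 bootstrap percolation of 2s on 1s internal to B. If S ⊂ B is a rectangle that is completely filled by 2s in the final configuration, then for every natural number j ≤ long(S), there exists a rectangle R ⊂ B whose internal dynamics completely fills R with 2s, and with long(R) ∈ [j/2, j], where long(·) denotes the length of the longest side. -/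
/-- One step of threshold-2 bootstrap percolation of 2s (`true`) on 1s (`false`),
internal to the finite region `B`. -/
def bstep (B : Finset (ℤ × ℤ)) (σ : ℤ × ℤ → Bool) : ℤ × ℤ → Bool := fun v =>
  σ v || (decide (v ∈ B) &&
    decide (2 ≤ (neighbors v).countP (fun w => decide (w ∈ B) && σ w)))

/-- The final configuration of the internal bootstrap dynamics on `B`. -/
def bfinal (B : Finset (ℤ × ℤ)) (σ : ℤ × ℤ → Bool) : ℤ × ℤ → Bool :=
  (bstep B)^[B.card + 1] σ

/-
The final configuration is described inductively (`Infected`): the dynamics on `B` is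
monotone and only acts inside `B`, so it stabilises within `|B|` steps.

The rest is the Aizenman–Lebowitz rectangle process. Start from the `1 × 1` rectangles at the
initially occupied sites of `B`. Two internally spanned rectangles that are both in or next to a
common site `v` have an internally spanned bounding box (a rectangle grows one line at a time
towards any infected site next to it), and its long side is at most the sum of theirs plus one.
Put `K = ⌈j/2⌉` and suppose no internally spanned rectangle in `B` has long side in `[K, 2K - 1]`.
Then merging never produces a long side `≥ K`, so a seed cover by rectangles of long side `< K`
with the fewest rectangles is separated (no site is in or next to two of them). Such a family is
closed under the dynamics, so it covers every site that becomes occupied, and by connectedness the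
filled rectangle `S` lies inside one member, contradicting `long(S) ≥ j ≥ K`.
-/

open Finset

theorem List.Nodup.two_le_countP_iff {α : Type*} [DecidableEq α] {l : List α} (hl : l.Nodup)
    (p : α → Bool) :
    2 ≤ l.countP p ↔ ∃ a ∈ l, ∃ b ∈ l, a ≠ b ∧ p a = true ∧ p b = true := by
  rw [List.countP_eq_length_filter, ← List.toFinset_card_of_nodup (hl.filter p),
    Nat.succ_le_iff, Finset.one_lt_card_iff]
  simp only [List.mem_toFinset, List.mem_filter]
  aesop

section Stabilization

variable {α : Type*} {B : Finset α} {f : (α → Bool) → α → Bool}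

theorem iterate_mono_of_inflationary (hinf : ∀ σ v, σ v = true → f σ v = true)
    {σ : α → Bool} {v : α} {k m : ℕ} (hkm : k ≤ m) (hk : f^[k] σ v = true) :
    f^[m] σ v = true := by
  induction m, hkm using Nat.le_induction with
  | base => exact hk
  | succ m _ ih => rw [Function.iterate_succ_apply']; exact hinf _ _ ih

theorem exists_isFixedPt_iterate (hinf : ∀ σ v, σ v = true → f σ v = true)
    (hout : ∀ σ v, v ∉ B → f σ v = σ v) (σ : α → Bool) :
    ∃ k ≤ B.card, Function.IsFixedPt f (f^[k] σ) := by
  by_contra! hmoving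
  let A : ℕ → Finset α := fun k => B.filter (fun v => f^[k] σ v = true)
  have hgrow : ∀ k ≤ B.card, A k ⊂ A (k + 1) := by
    intro k hk
    obtain ⟨v, hv⟩ := Function.ne_iff.1 (hmoving k hk)
    have hvB : v ∈ B := by_contra fun h => hv (hout _ v h)
    have hnew : f^[k] σ v = false ∧ f^[k + 1] σ v = true := by
      rw [Function.iterate_succ_apply']
      cases h : f^[k] σ v
      · simpa [h] using hv
      · simp [h, hinf _ _ h] at hv
    refine (ssubset_iff_of_subset fun w hw => ?_).2 ⟨v, ?_, ?_⟩
    · simp only [A, mem_filter] at hw ⊢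
      exact ⟨hw.1, iterate_mono_of_inflationary hinf k.le_succ hw.2⟩
    · exact mem_filter.2 ⟨hvB, hnew.2⟩
    · simp [A, hnew.1]
  have hcard : ∀ k ≤ B.card + 1, k ≤ (A k).card := by
    intro k
    induction k with
    | zero => simp
    | succ k ih =>
      intro hk
      have := card_lt_card (hgrow k (by omega))
      have := ih (by omega)
      omega
  have := (hcard _ le_rfl).trans (card_filter_le _ _)
  omega

theorem iterate_card_succ_of_iterate (hinf : ∀ σ v, σ v = true → f σ v = true)
    (hout : ∀ σ v, v ∉ B → f σ v = σ v) {σ : α → Bool} {v : α} {k : ℕ}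
    (hk : f^[k] σ v = true) : f^[B.card + 1] σ v = true := by
  obtain ⟨k₀, hk₀, hfix⟩ := exists_isFixedPt_iterate hinf hout σ
  have hstable : ∀ m, k₀ ≤ m → f^[m] σ = f^[k₀] σ := fun m hm => by
    rw [← Nat.sub_add_cancel hm, Function.iterate_add_apply, (hfix.iterate _).eq]
  have := iterate_mono_of_inflationary hinf (le_max_left k (B.card + 1)) hk
  rwa [hstable _ (by omega), ← hstable (B.card + 1) (by omega)] at this

end Stabilization

inductive Infected (B : Finset (ℤ × ℤ)) (σ : ℤ × ℤ → Bool) : ℤ × ℤ → Prop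
  | initial {v : ℤ × ℤ} : σ v = true → Infected B σ v
  | spread {v w₁ w₂ : ℤ × ℤ} : v ∈ B → w₁ ∈ neighbors v → w₂ ∈ neighbors v → w₁ ≠ w₂ →
      w₁ ∈ B → w₂ ∈ B → Infected B σ w₁ → Infected B σ w₂ → Infected B σ v

theorem mem_neighbors {v w : ℤ × ℤ} :
    w ∈ neighbors v ↔ w.1 = v.1 + 1 ∧ w.2 = v.2 ∨ w.1 = v.1 - 1 ∧ w.2 = v.2 ∨
      w.1 = v.1 ∧ w.2 = v.2 + 1 ∨ w.1 = v.1 ∧ w.2 = v.2 - 1 := by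
  simp [neighbors, Prod.ext_iff]

theorem neighbors_nodup (v : ℤ × ℤ) : (neighbors v).Nodup := by
  simp only [neighbors, List.nodup_cons, List.mem_cons, List.not_mem_nil, Prod.ext_iff,
    List.nodup_nil, or_false, and_true, not_false_eq_true]
  omega

theorem mem_neighbors_comm {v w : ℤ × ℤ} : w ∈ neighbors v ↔ v ∈ neighbors w := by
  simp only [mem_neighbors]
  omega

section Dynamics

variable {B : Finset (ℤ × ℤ)} {σ : ℤ × ℤ → Bool}

theorem bstep_eq_true_iff {v : ℤ × ℤ} :
    bstep B σ v = true ↔ σ v = true ∨ v ∈ B ∧ ∃ w₁ ∈ neighbors v, ∃ w₂ ∈ neighbors v,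
      w₁ ≠ w₂ ∧ (w₁ ∈ B ∧ σ w₁ = true) ∧ (w₂ ∈ B ∧ σ w₂ = true) := by
  simp only [bstep, Bool.or_eq_true, Bool.and_eq_true, decide_eq_true_eq,
    (neighbors_nodup v).two_le_countP_iff]

theorem bstep_of_eq_true {v : ℤ × ℤ} (h : σ v = true) : bstep B σ v = true :=
  bstep_eq_true_iff.2 (Or.inl h)

theorem bstep_of_notMem {v : ℤ × ℤ} (h : v ∉ B) : bstep B σ v = σ v := by
  simp [bstep, h]

theorem infected_of_iterate_bstep {k : ℕ} {v : ℤ × ℤ} (h : (bstep B)^[k] σ v = true) :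
    Infected B σ v := by
  induction k generalizing v with
  | zero => exact .initial h
  | succ k ih =>
    rw [Function.iterate_succ_apply', bstep_eq_true_iff] at h
    obtain h | ⟨hv, w₁, hw₁, w₂, hw₂, hne, ⟨hB₁, h₁⟩, ⟨hB₂, h₂⟩⟩ := h
    · exact ih h
    · exact .spread hv hw₁ hw₂ hne hB₁ hB₂ (ih h₁) (ih h₂)

theorem Infected.exists_iterate_bstep {v : ℤ × ℤ} (h : Infected B σ v) :
    ∃ k, (bstep B)^[k] σ v = true := by
  induction h with
  | initial h => exact ⟨0, h⟩
  | @spread v w₁ w₂ hv hw₁ hw₂ hne hB₁ hB₂ _ _ ih₁ ih₂ =>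
    obtain ⟨k₁, hk₁⟩ := ih₁
    obtain ⟨k₂, hk₂⟩ := ih₂
    refine ⟨max k₁ k₂ + 1, ?_⟩
    rw [Function.iterate_succ_apply', bstep_eq_true_iff]
    exact Or.inr ⟨hv, w₁, hw₁, w₂, hw₂, hne,
      ⟨hB₁, iterate_mono_of_inflationary (fun _ _ => bstep_of_eq_true) (le_max_left _ _) hk₁⟩,
      ⟨hB₂, iterate_mono_of_inflationary (fun _ _ => bstep_of_eq_true) (le_max_right _ _) hk₂⟩⟩

theorem bfinal_eq_true_iff {v : ℤ × ℤ} : bfinal B σ v = true ↔ Infected B σ v := by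
  refine ⟨infected_of_iterate_bstep, fun h => ?_⟩
  obtain ⟨k, hk⟩ := h.exists_iterate_bstep
  exact iterate_card_succ_of_iterate (fun _ _ => bstep_of_eq_true)
    (fun _ _ => bstep_of_notMem) hk

theorem Infected.mono {B' : Finset (ℤ × ℤ)} {v : ℤ × ℤ} (h : Infected B σ v) (hB : B ⊆ B') :
    Infected B' σ v := by
  induction h with
  | initial h => exact .initial h
  | spread hv hw₁ hw₂ hne hB₁ hB₂ _ _ ih₁ ih₂ =>
    exact .spread (hB hv) hw₁ hw₂ hne (hB hB₁) (hB hB₂) ih₁ ih₂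

theorem Infected.exists_initial {v : ℤ × ℤ} (h : Infected B σ v) (hv : v ∈ B) :
    ∃ x ∈ B, σ x = true := by
  induction h with
  | initial h => exact ⟨_, hv, h⟩
  | spread _ _ _ _ hB₁ _ _ _ ih₁ _ => exact ih₁ hB₁

end Dynamics

theorem mem_Icc_iff_coords {p q v : ℤ × ℤ} :
    v ∈ Icc p q ↔ p.1 ≤ v.1 ∧ v.1 ≤ q.1 ∧ p.2 ≤ v.2 ∧ v.2 ≤ q.2 := by
  simp only [mem_Icc, Prod.le_def]
  tauto

def Near (v p q : ℤ × ℤ) : Prop :=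
  v ∈ Icc p q ∨ ∃ w ∈ Icc p q, w ∈ neighbors v

theorem Near.le {v p q : ℤ × ℤ} (h : Near v p q) : p ≤ q := by
  obtain h | ⟨w, h, -⟩ := h <;> exact nonempty_Icc.1 ⟨_, h⟩

theorem mem_Icc_of_mem_neighbors {p q v w₁ w₂ : ℤ × ℤ} (h₁ : w₁ ∈ neighbors v)
    (h₂ : w₂ ∈ neighbors v) (hne : w₁ ≠ w₂) (hw₁ : w₁ ∈ Icc p q) (hw₂ : w₂ ∈ Icc p q) :
    v ∈ Icc p q := by
  rw [Ne, Prod.ext_iff] at hne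
  simp only [mem_neighbors, mem_Icc_iff_coords] at *
  omega

theorem exists_adjacent_of_near {p q s t u z : ℤ × ℤ} (hu : u ∈ Icc s t) (hnear : Near u p q)
    (hz : z ∈ Icc s t) (hzR : z ∉ Icc p q) :
    ∃ u' ∈ Icc s t, u' ∉ Icc p q ∧ ∃ w ∈ Icc p q, w ∈ neighbors u' := by
  by_cases huR : u ∈ Icc p q
  swap
  · exact ⟨u, hu, huR, hnear.resolve_left huR⟩
  simp only [mem_Icc_iff_coords] at *
  -- step out of `Icc p q` from `u` in a direction in which `z` lies outside it
  obtain h | h | h | h : z.1 < p.1 ∨ q.1 < z.1 ∨ z.2 < p.2 ∨ q.2 < z.2 := by omega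
  · refine ⟨(p.1 - 1, u.2), ?_, ?_, (p.1, u.2), ?_, ?_⟩ <;>
      simp only [mem_neighbors, and_true] <;> omega
  · refine ⟨(q.1 + 1, u.2), ?_, ?_, (q.1, u.2), ?_, ?_⟩ <;>
      simp only [mem_neighbors, and_true] <;> omega
  · refine ⟨(u.1, p.2 - 1), ?_, ?_, (u.1, p.2), ?_, ?_⟩ <;>
      simp only [mem_neighbors, true_and] <;> omega
  · refine ⟨(u.1, q.2 + 1), ?_, ?_, (u.1, q.2), ?_, ?_⟩ <;>
      simp only [mem_neighbors, true_and] <;> omega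

def longSide (p q : ℤ × ℤ) : ℤ := max (q.1 - p.1 + 1) (q.2 - p.2 + 1)

theorem Near.bounds {v p q : ℤ × ℤ} (h : Near v p q) :
    p.1 ≤ v.1 + 1 ∧ v.1 ≤ q.1 + 1 ∧ p.2 ≤ v.2 + 1 ∧ v.2 ≤ q.2 + 1 := by
  obtain h | ⟨w, h, hw⟩ := h <;> simp only [mem_Icc_iff_coords, mem_neighbors] at * <;> omega

theorem longSide_inf_sup_le {v p₁ q₁ p₂ q₂ : ℤ × ℤ} (h₁ : Near v p₁ q₁) (h₂ : Near v p₂ q₂) :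
    longSide (p₁ ⊓ p₂) (q₁ ⊔ q₂) ≤ longSide p₁ q₁ + longSide p₂ q₂ + 1 := by
  have := h₁.bounds
  have := h₂.bounds
  have := Prod.le_def.1 h₁.le
  have := Prod.le_def.1 h₂.le
  simp only [longSide, Prod.fst_inf, Prod.snd_inf, Prod.fst_sup, Prod.snd_sup]
  omega

section Growth

variable {X : Finset (ℤ × ℤ)} {σ : ℤ × ℤ → Bool}

theorem infected_of_segment (z s : ℤ → ℤ × ℤ) {lo hi k : ℤ} (hlo : lo ≤ k) (hhi : k ≤ hi)
    (hk : Infected X σ (z k)) (hzX : ∀ i, lo ≤ i → i ≤ hi → z i ∈ X)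
    (hs : ∀ i, lo ≤ i → i ≤ hi → s i ∈ X ∧ Infected X σ (s i))
    (hstep : ∀ i, z (i + 1) ∈ neighbors (z i)) (hside : ∀ i, s i ∈ neighbors (z i))
    (hsz : ∀ i j, z i ≠ s j) {i : ℤ} (hi₁ : lo ≤ i) (hi₂ : i ≤ hi) : Infected X σ (z i) := by
  rcases le_total k i with hki | hik
  · induction i, hki using Int.leInduction with
    | base => exact hk
    | succ i hki ih =>
      exact .spread (hzX _ hi₁ hi₂) (mem_neighbors_comm.1 (hstep i)) (hside _) (hsz _ _)
        (hzX _ (by omega) (by omega)) (hs _ hi₁ hi₂).1 (ih (by omega) (by omega))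
        (hs _ hi₁ hi₂).2
  · induction i, hik using Int.leInductionDown with
    | base => exact hk
    | pred i hik ih =>
      have hprev := hstep (i - 1)
      rw [sub_add_cancel] at hprev
      exact .spread (hzX _ hi₁ hi₂) hprev (hside _) (hsz _ _)
        (hzX _ (by omega) (by omega)) (hs _ hi₁ hi₂).1 (ih (by omega) (by omega))
        (hs _ hi₁ hi₂).2

theorem infected_Icc_inf_sup_of_adjacent {p q u w : ℤ × ℤ}
    (hR : ∀ z ∈ Icc p q, Infected X σ z) (hu : Infected X σ u) (hw : w ∈ Icc p q)
    (hwu : w ∈ neighbors u) (hX : Icc (p ⊓ u) (q ⊔ u) ⊆ X) :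
    ∀ z ∈ Icc (p ⊓ u) (q ⊔ u), Infected X σ z := by
  intro z hz
  by_cases hzR : z ∈ Icc p q
  · exact hR z hzR
  have hX' : ∀ v : ℤ × ℤ, min p.1 u.1 ≤ v.1 ∧ v.1 ≤ max q.1 u.1 ∧ min p.2 u.2 ≤ v.2 ∧
      v.2 ≤ max q.2 u.2 → v ∈ X := fun v hv => hX (mem_Icc_iff_coords.2 hv)
  have hR' : ∀ v : ℤ × ℤ, p.1 ≤ v.1 ∧ v.1 ≤ q.1 ∧ p.2 ≤ v.2 ∧ v.2 ≤ q.2 →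
      v ∈ X ∧ Infected X σ v := fun v hv =>
    ⟨hX (Icc_subset_Icc inf_le_left le_sup_left (mem_Icc_iff_coords.2 hv)),
      hR v (mem_Icc_iff_coords.2 hv)⟩
  rw [mem_Icc_iff_coords] at hw hz hzR
  simp only [Prod.fst_inf, Prod.snd_inf, Prod.fst_sup, Prod.snd_sup] at hz
  rw [mem_neighbors] at hwu
  -- `z` lies on the line through `u` parallel to the side of `Icc p q` that `u` touches
  by_cases hvert : w.2 = u.2
  · have hz' : z = (u.1, z.2) := Prod.ext (by dsimp only; omega) rfl
    rw [hz']
    exact infected_of_segment (fun i => (u.1, i)) (fun i => (w.1, i)) (lo := p.2) (hi := q.2)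
      (by omega) (by omega) hu (fun i _ _ => hX' _ (by omega)) (fun i _ _ => hR' _ (by omega))
      (fun i => mem_neighbors.2 (by omega)) (fun i => mem_neighbors.2 (by omega))
      (fun i j => by rw [Ne, Prod.ext_iff]; omega) (by omega) (by omega)
  · have hz' : z = (z.1, u.2) := Prod.ext rfl (by dsimp only; omega)
    rw [hz']
    exact infected_of_segment (fun i => (i, u.2)) (fun i => (i, w.2)) (lo := p.1) (hi := q.1)
      (by omega) (by omega) hu (fun i _ _ => hX' _ (by omega)) (fun i _ _ => hR' _ (by omega))
      (fun i => mem_neighbors.2 (by omega)) (fun i => mem_neighbors.2 (by omega))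
      (fun i j => by rw [Ne, Prod.ext_iff]; omega) (by omega) (by omega)

theorem infected_Icc_inf_sup_of_near {p q s t u : ℤ × ℤ}
    (hR : ∀ z ∈ Icc p q, Infected X σ z) (hT : ∀ z ∈ Icc s t, Infected X σ z)
    (hu : u ∈ Icc s t) (hnear : Near u p q) (hX : Icc (p ⊓ s) (q ⊔ t) ⊆ X) :
    ∀ z ∈ Icc (p ⊓ s) (q ⊔ t), Infected X σ z := by
  by_cases hTR : Icc s t ⊆ Icc p q
  · obtain ⟨hps, htq⟩ := (Icc_subset_Icc_iff (nonempty_Icc.1 ⟨u, hu⟩)).1 hTR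
    rwa [inf_eq_left.2 hps, sup_eq_left.2 htq]
  obtain ⟨z, hzT, hzR⟩ := not_subset.1 hTR
  obtain ⟨u', hu'T, hu'R, w, hw, hwu'⟩ := exists_adjacent_of_near hu hnear hzT hzR
  obtain ⟨hsu', hu't⟩ := mem_Icc.1 hu'T
  have hsub : Icc (p ⊓ u') (q ⊔ u') ⊆ Icc (p ⊓ s) (q ⊔ t) :=
    Icc_subset_Icc (inf_le_inf_left _ hsu') (sup_le_sup_left hu't _)
  have hgrow := infected_Icc_inf_sup_of_adjacent hR (hT u' hu'T) hw hwu' (hsub.trans hX)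
  have hinf : p ⊓ u' ⊓ s = p ⊓ s := by rw [inf_assoc, inf_eq_right.2 hsu']
  have hsup : q ⊔ u' ⊔ t = q ⊔ t := by rw [sup_assoc, sup_eq_right.2 hu't]
  have hlt : (Icc p q).card < (Icc (p ⊓ u') (q ⊔ u')).card :=
    card_lt_card ((ssubset_iff_of_subset (Icc_subset_Icc inf_le_left le_sup_left)).2
      ⟨u', mem_Icc.2 ⟨inf_le_right, le_sup_right⟩, hu'R⟩)
  have hle := card_le_card hsub
  rw [← hinf, ← hsup] at hX ⊢
  exact infected_Icc_inf_sup_of_near hgrow hT hu'T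
    (Or.inl (mem_Icc.2 ⟨inf_le_right, le_sup_right⟩)) hX
termination_by (Icc (p ⊓ s) (q ⊔ t)).card - (Icc p q).card
decreasing_by rw [hinf, hsup]; omega

end Growth

def InternallySpanned (σ : ℤ × ℤ → Bool) (p q : ℤ × ℤ) : Prop :=
  ∀ z ∈ Icc p q, Infected (Icc p q) σ z

theorem near_cases {v p₁ q₁ p₂ q₂ : ℤ × ℤ} (h₁ : Near v p₁ q₁) (h₂ : Near v p₂ q₂) :
    (∃ u ∈ Icc p₂ q₂, Near u p₁ q₁) ∨ ∃ w₁ ∈ Icc p₁ q₁, ∃ w₂ ∈ Icc p₂ q₂,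
      w₁ ≠ w₂ ∧ w₁ ∈ neighbors v ∧ w₂ ∈ neighbors v := by
  obtain hv₁ | ⟨w₁, hw₁, hw₁v⟩ := h₁ <;> obtain hv₂ | ⟨w₂, hw₂, hw₂v⟩ := h₂
  · exact .inl ⟨v, hv₂, .inl hv₁⟩
  · exact .inl ⟨w₂, hw₂, .inr ⟨v, hv₁, mem_neighbors_comm.1 hw₂v⟩⟩
  · exact .inl ⟨v, hv₂, .inr ⟨w₁, hw₁, hw₁v⟩⟩
  · by_cases hw : w₁ = w₂
    · exact .inl ⟨w₂, hw₂, .inl (hw ▸ hw₁)⟩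
    · exact .inr ⟨w₁, hw₁, w₂, hw₂, hw, hw₁v, hw₂v⟩

theorem InternallySpanned.inf_sup {σ : ℤ × ℤ → Bool} {v p₁ q₁ p₂ q₂ : ℤ × ℤ}
    (h₁ : InternallySpanned σ p₁ q₁) (h₂ : InternallySpanned σ p₂ q₂)
    (hv₁ : Near v p₁ q₁) (hv₂ : Near v p₂ q₂) :
    InternallySpanned σ (p₁ ⊓ p₂) (q₁ ⊔ q₂) := by
  set X := Icc (p₁ ⊓ p₂) (q₁ ⊔ q₂)
  have hR₁ : Icc p₁ q₁ ⊆ X := Icc_subset_Icc inf_le_left le_sup_left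
  have hR₂ : Icc p₂ q₂ ⊆ X := Icc_subset_Icc inf_le_right le_sup_right
  have hI₁ : ∀ z ∈ Icc p₁ q₁, Infected X σ z := fun z hz => (h₁ z hz).mono hR₁
  have hI₂ : ∀ z ∈ Icc p₂ q₂, Infected X σ z := fun z hz => (h₂ z hz).mono hR₂
  obtain ⟨u, hu, hnear⟩ | ⟨w₁, hw₁, w₂, hw₂, hne, hw₁v, hw₂v⟩ := near_cases hv₁ hv₂
  · exact infected_Icc_inf_sup_of_near hI₁ hI₂ hu hnear subset_rfl
  -- otherwise `v` is infected by `w₁` and `w₂`: absorb `v` into the first rectangle, then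
  -- absorb the second rectangle
  have hvX : v ∈ X := mem_Icc_of_mem_neighbors hw₁v hw₂v hne (hR₁ hw₁) (hR₂ hw₂)
  have hv : Infected X σ v :=
    .spread hvX hw₁v hw₂v hne (hR₁ hw₁) (hR₂ hw₂) (hI₁ _ hw₁) (hI₂ _ hw₂)
  obtain ⟨hpv, hvq⟩ := mem_Icc.1 hvX
  have hI₁' := infected_Icc_inf_sup_of_near hI₁ (s := v) (t := v)
    (fun z hz => by rw [Icc_self, mem_singleton] at hz; rwa [hz]) (mem_Icc.2 ⟨le_rfl, le_rfl⟩)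
    (.inr ⟨w₁, hw₁, hw₁v⟩) (Icc_subset_Icc (le_inf inf_le_left hpv) (sup_le le_sup_left hvq))
  have hinf : p₁ ⊓ v ⊓ p₂ = p₁ ⊓ p₂ := by
    rw [inf_right_comm, inf_eq_left.2 hpv]
  have hsup : q₁ ⊔ v ⊔ q₂ = q₁ ⊔ q₂ := by
    rw [sup_right_comm, sup_eq_left.2 hvq]
  have := infected_Icc_inf_sup_of_near hI₁' hI₂ hw₂
    (.inr ⟨v, mem_Icc.2 ⟨inf_le_right, le_sup_right⟩, mem_neighbors_comm.1 hw₂v⟩)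
    (by rw [hinf, hsup])
  rwa [hinf, hsup] at this

theorem longSide_le_of_Icc_subset {a b p q : ℤ × ℤ} (hab : a ≤ b) (h : Icc a b ⊆ Icc p q) :
    longSide a b ≤ longSide p q := by
  obtain ⟨⟨hpa₁, hpa₂⟩, ⟨hbq₁, hbq₂⟩⟩ := (Icc_subset_Icc_iff hab).1 h
  obtain ⟨hab₁, hab₂⟩ := hab
  simp only [longSide]
  omega

section SeedCover

variable {B : Finset (ℤ × ℤ)} {σ : ℤ × ℤ → Bool} {K : ℤ}

def NoSpannedWindow (B : Finset (ℤ × ℤ)) (σ : ℤ × ℤ → Bool) (K : ℤ) : Prop :=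
  ∀ p q, p ≤ q → Icc p q ⊆ B → InternallySpanned σ p q →
    longSide p q ≤ 2 * K - 1 → longSide p q < K

-- A rectangle is encoded by its corners `(p, q)`, standing for `Icc p q`.
def IsSeedCover (B : Finset (ℤ × ℤ)) (σ : ℤ × ℤ → Bool) (K : ℤ)
    (C : Finset ((ℤ × ℤ) × (ℤ × ℤ))) : Prop :=
  (∀ r ∈ C, Icc r.1 r.2 ⊆ B ∧ InternallySpanned σ r.1 r.2 ∧ longSide r.1 r.2 < K) ∧
    ∀ x ∈ B, σ x = true → ∃ r ∈ C, x ∈ Icc r.1 r.2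

def Separated (C : Finset ((ℤ × ℤ) × (ℤ × ℤ))) : Prop :=
  ∀ r₁ ∈ C, ∀ r₂ ∈ C, ∀ v, Near v r₁.1 r₁.2 → Near v r₂.1 r₂.2 → r₁ = r₂

theorem internallySpanned_self {x : ℤ × ℤ} (h : σ x = true) : InternallySpanned σ x x :=
  fun z hz => .initial (by rw [Icc_self, mem_singleton] at hz; rwa [hz])

theorem isSeedCover_singletons (hK : 1 < K) :
    IsSeedCover B σ K ((B.filter (σ · = true)).image fun x => (x, x)) := by
  refine ⟨fun r hr => ?_, fun x hx hσx => ⟨(x, x), mem_image_of_mem _ (mem_filter.2 ⟨hx, hσx⟩),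
    mem_Icc.2 ⟨le_rfl, le_rfl⟩⟩⟩
  obtain ⟨x, hx, rfl⟩ := mem_image.1 hr
  obtain ⟨hxB, hσx⟩ := mem_filter.1 hx
  exact ⟨by simpa using hxB, internallySpanned_self hσx, by simpa [longSide] using hK⟩

theorem IsSeedCover.merge {c d : ℤ × ℤ} {C : Finset ((ℤ × ℤ) × (ℤ × ℤ))}
    (hC : IsSeedCover (Icc c d) σ K C)
    (hsmall : NoSpannedWindow (Icc c d) σ K)
    {r₁ r₂ : (ℤ × ℤ) × (ℤ × ℤ)} (h₁ : r₁ ∈ C) (h₂ : r₂ ∈ C) {v : ℤ × ℤ}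
    (hv₁ : Near v r₁.1 r₁.2) (hv₂ : Near v r₂.1 r₂.2) :
    IsSeedCover (Icc c d) σ K (insert (r₁.1 ⊓ r₂.1, r₁.2 ⊔ r₂.2) ((C.erase r₁).erase r₂)) := by
  obtain ⟨hB₁, hS₁, hL₁⟩ := hC.1 r₁ h₁
  obtain ⟨hB₂, hS₂, hL₂⟩ := hC.1 r₂ h₂
  obtain ⟨hc₁, hd₁⟩ := (Icc_subset_Icc_iff hv₁.le).1 hB₁
  obtain ⟨hc₂, hd₂⟩ := (Icc_subset_Icc_iff hv₂.le).1 hB₂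
  have hB : Icc (r₁.1 ⊓ r₂.1) (r₁.2 ⊔ r₂.2) ⊆ Icc c d :=
    Icc_subset_Icc (le_inf hc₁ hc₂) (sup_le hd₁ hd₂)
  have hL := longSide_inf_sup_le hv₁ hv₂
  refine ⟨fun r hr => ?_, fun x hx hσx => ?_⟩
  · obtain rfl | hr := mem_insert.1 hr
    · exact ⟨hB, hS₁.inf_sup hS₂ hv₁ hv₂, hsmall _ _ (inf_le_left.trans (hv₁.le.trans
        le_sup_left)) hB (hS₁.inf_sup hS₂ hv₁ hv₂) (by dsimp only; omega)⟩
    · exact hC.1 r (mem_of_mem_erase (mem_of_mem_erase hr))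
  · obtain ⟨r, hr, hxr⟩ := hC.2 x hx hσx
    by_cases hr₁ : r = r₁
    · exact ⟨_, mem_insert_self _ _, Icc_subset_Icc inf_le_left le_sup_left (hr₁ ▸ hxr)⟩
    by_cases hr₂ : r = r₂
    · exact ⟨_, mem_insert_self _ _, Icc_subset_Icc inf_le_right le_sup_right (hr₂ ▸ hxr)⟩
    exact ⟨r, mem_insert_of_mem (mem_erase.2 ⟨hr₂, mem_erase.2 ⟨hr₁, hr⟩⟩), hxr⟩

theorem exists_separated_isSeedCover {c d : ℤ × ℤ} {C₀ : Finset ((ℤ × ℤ) × (ℤ × ℤ))}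
    (hC₀ : IsSeedCover (Icc c d) σ K C₀)
    (hsmall : NoSpannedWindow (Icc c d) σ K) :
    ∃ C, IsSeedCover (Icc c d) σ K C ∧ Separated C := by
  obtain ⟨C, hC, hmin⟩ := (measure Finset.card).wf.has_min {C | IsSeedCover (Icc c d) σ K C}
    ⟨C₀, hC₀⟩
  refine ⟨C, hC, fun r₁ h₁ r₂ h₂ v hv₁ hv₂ => by_contra fun hne => ?_⟩
  refine hmin _ (hC.merge hsmall h₁ h₂ hv₁ hv₂) ?_
  have h₂' : r₂ ∈ C.erase r₁ := mem_erase.2 ⟨Ne.symm hne, h₂⟩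
  have := card_insert_le (r₁.1 ⊓ r₂.1, r₁.2 ⊔ r₂.2) ((C.erase r₁).erase r₂)
  have := card_erase_of_mem h₂'
  have := card_erase_of_mem h₁
  have := one_lt_card.2 ⟨r₁, h₁, r₂, h₂, hne⟩
  change _ < C.card
  omega

theorem IsSeedCover.exists_mem_of_infected {C : Finset ((ℤ × ℤ) × (ℤ × ℤ))}
    (hC : IsSeedCover B σ K C) (hsep : Separated C) {v : ℤ × ℤ} (hv : Infected B σ v)
    (hvB : v ∈ B) : ∃ r ∈ C, v ∈ Icc r.1 r.2 := by
  induction hv with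
  | initial h => exact hC.2 _ hvB h
  | spread _ hw₁ hw₂ hne hB₁ hB₂ _ _ ih₁ ih₂ =>
    obtain ⟨r₁, h₁, hw₁r⟩ := ih₁ hB₁
    obtain ⟨r₂, h₂, hw₂r⟩ := ih₂ hB₂
    obtain rfl := hsep r₁ h₁ r₂ h₂ _ (.inr ⟨_, hw₁r, hw₁⟩) (.inr ⟨_, hw₂r, hw₂⟩)
    exact ⟨r₁, h₁, mem_Icc_of_mem_neighbors hw₁ hw₂ hne hw₁r hw₂r⟩

theorem Separated.exists_Icc_subset {C : Finset ((ℤ × ℤ) × (ℤ × ℤ))} (hsep : Separated C)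
    {a b : ℤ × ℤ} (hab : a ≤ b) (hcov : ∀ z ∈ Icc a b, ∃ r ∈ C, z ∈ Icc r.1 r.2) :
    ∃ r ∈ C, Icc a b ⊆ Icc r.1 r.2 := by
  have ha : a ∈ Icc a b := mem_Icc.2 ⟨le_rfl, hab⟩
  obtain ⟨r, hr, har⟩ := hcov a ha
  refine ⟨r, hr, fun z hz => by_contra fun hzr => ?_⟩
  obtain ⟨u, hu, hur, w, hw, hwu⟩ := exists_adjacent_of_near ha (.inl har) hz hzr
  obtain ⟨r', hr', hur'⟩ := hcov u hu
  exact hur (hsep r' hr' r hr u (.inl hur') (.inr ⟨w, hw, hwu⟩) ▸ hur')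

end SeedCover

theorem exists_internallySpanned_longSide_mem {c d a b : ℤ × ℤ} {σ : ℤ × ℤ → Bool} {K : ℤ}
    (hK : 1 ≤ K) (hab : a ≤ b) (hS : Icc a b ⊆ Icc c d)
    (hfill : ∀ v ∈ Icc a b, Infected (Icc c d) σ v) (hlong : K ≤ longSide a b) :
    ∃ p q, p ≤ q ∧ Icc p q ⊆ Icc c d ∧ InternallySpanned σ p q ∧
      K ≤ longSide p q ∧ longSide p q ≤ 2 * K - 1 := by
  by_contra! hno
  have hsmall : NoSpannedWindow (Icc c d) σ K := fun p q hpq hB hS hL =>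
    lt_of_not_ge fun h => (hno p q hpq hB hS h).not_ge hL
  have ha : a ∈ Icc a b := mem_Icc.2 ⟨le_rfl, hab⟩
  obtain ⟨x, hxB, hσx⟩ := (hfill a ha).exists_initial (hS ha)
  have hK' : 1 < K := by
    simpa [longSide] using hsmall x x le_rfl (by simpa using hxB) (internallySpanned_self hσx)
      (by simp [longSide]; omega)
  obtain ⟨C, hC, hsep⟩ := exists_separated_isSeedCover (isSeedCover_singletons hK') hsmall
  obtain ⟨r, hr, hSr⟩ := hsep.exists_Icc_subset hab fun z hz =>
    hC.exists_mem_of_infected hsep (hfill z hz) (hS hz)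
  have := longSide_le_of_Icc_subset hab hSr
  have := (hC.1 r hr).2.2
  omega

theorem stmt12_general (n : ℕ) (c : ℤ × ℤ) (B : Finset (ℤ × ℤ))
    (hB : B = Finset.Icc c (c.1 + (n : ℤ) - 1, c.2 + (n : ℤ) - 1))
    (σ : ℤ × ℤ → Bool)
    (a b : ℤ × ℤ) (hab : a ≤ b) (hS : Finset.Icc a b ⊆ B)
    (hfill : ∀ v ∈ Finset.Icc a b, bfinal B σ v = true)
    (j : ℕ) (hj : 1 ≤ j) (hjlong : (j : ℤ) ≤ max (b.1 - a.1 + 1) (b.2 - a.2 + 1)) :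
    ∃ a' b' : ℤ × ℤ, a' ≤ b' ∧ Finset.Icc a' b' ⊆ B ∧
      (j : ℤ) ≤ 2 * max (b'.1 - a'.1 + 1) (b'.2 - a'.2 + 1) ∧
      max (b'.1 - a'.1 + 1) (b'.2 - a'.2 + 1) ≤ (j : ℤ) ∧
      ∀ v ∈ Finset.Icc a' b', bfinal (Finset.Icc a' b') σ v = true := by
  subst hB
  obtain ⟨p, q, hpq, hpB, hspan, hK, hK'⟩ := exists_internallySpanned_longSide_mem
    (K := ((j : ℤ) + 1) / 2) (by omega) hab hS (fun v hv => bfinal_eq_true_iff.1 (hfill v hv))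
    (by simp only [longSide]; omega)
  refine ⟨p, q, hpq, hpB, ?_, ?_, fun v hv => bfinal_eq_true_iff.2 (hspan v hv)⟩ <;>
    simp only [longSide] at hK hK' <;> omega

/-- Aizenman–Lebowitz scaling lemma: if a square box `B` (containing only states 1 and 2,
encoded by `Bool`) has a rectangle `Icc a b ⊆ B` completely filled by 2s in the final
internal configuration on `B`, then for every `j ≤ long(Icc a b)` there is a rectangle
`Icc a' b' ⊆ B` internally filled by 2s with longest side in `[j/2, j]`. -/
theorem stmt12 (n : ℕ) (hn : 1 ≤ n) (c : ℤ × ℤ) (B : Finset (ℤ × ℤ))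
    (hB : B = Finset.Icc c (c.1 + (n : ℤ) - 1, c.2 + (n : ℤ) - 1))
    (σ : ℤ × ℤ → Bool)
    (a b : ℤ × ℤ) (hab : a ≤ b) (hS : Finset.Icc a b ⊆ B)
    (hfill : ∀ v ∈ Finset.Icc a b, bfinal B σ v = true)
    (j : ℕ) (hj : 1 ≤ j) (hjlong : (j : ℤ) ≤ max (b.1 - a.1 + 1) (b.2 - a.2 + 1)) :
    ∃ a' b' : ℤ × ℤ, a' ≤ b' ∧ Finset.Icc a' b' ⊆ B ∧
      (j : ℤ) ≤ 2 * max (b'.1 - a'.1 + 1) (b'.2 - a'.2 + 1) ∧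
      max (b'.1 - a'.1 + 1) (b'.2 - a'.2 + 1) ≤ (j : ℤ) ∧
      ∀ v ∈ Finset.Icc a' b', bfinal (Finset.Icc a' b') σ v = true :=
  stmt12_general n c B hB σ a b hab hS hfill j hj hjlong
end

section
/- Fix an integer s ≥ 1 and consider the box A = [−⌊q^{−s}⌋, ⌊q^{−s}⌋]² in ℤ². Assign each vertex of A state 2 independently with probability q and state 1 otherwise, and run threshold-2 bootstrap percolation of 2s on 1s internal to A. Then there is a constant c_0 = c_0(s) such that for all small q, with probability at least 1 − c_0·q^s, every maximal connected set of state-2 vertices in the final configuration has ℓ∞-diameter at most 16s. -/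
open MeasureTheory ProbabilityTheory

/-- Nearest-neighbor adjacency in `ℤ²`. -/
def Adj (u v : ℤ × ℤ) : Prop := (u.1 - v.1).natAbs + (u.2 - v.2).natAbs = 1

/-- A finite set is connected for nearest-neighbor adjacency. -/
def ConnectedIn (C : Finset (ℤ × ℤ)) : Prop :=
  ∀ u ∈ C, ∀ v ∈ C, ∃ l : List (ℤ × ℤ), (∀ w ∈ l, w ∈ C) ∧ List.Chain Adj u l ∧
    (u :: l).getLast (by simp) = v

/-- The box `[-⌊q^{-s}⌋, ⌊q^{-s}⌋]²`. -/
noncomputable def boxA (s : ℕ) (q : ℝ) : Finset (ℤ × ℤ) :=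
  Finset.Icc (-⌊q⁻¹ ^ s⌋, -⌊q⁻¹ ^ s⌋) (⌊q⁻¹ ^ s⌋, ⌊q⁻¹ ^ s⌋)

/-!
The final 2s in a box are covered by internally spanned rectangles pairwise at `ℓ¹`-distance at
least `3`: starting from the initial 2s, repeatedly replace two internally spanned rectangles at
distance at most `2` by their hull, which is again internally spanned (Aizenman–Lebowitz).
A hull has diameter at most the sum of the two diameters plus `2`, so every rectangle of the
process contains internally spanned rectangles of every intermediate scale. A connected final
cluster of `ℓ∞`-diameter larger than `16s` lies in one rectangle of the cover, hence there is an
internally spanned rectangle of diameter between `16s` and `32s`. Bootstrap growth cannot cross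
two consecutive empty lines, so each of `8s` disjoint double lines across its longer side
contains an initial 2. A union bound over the `O(q^{-2s})` anchors and the boundedly many sets
of `8s` sites of a `(32s+1)`-square bounds the probability by `O(q^{-2s} q^{8s}) = O(q^s)`.
-/

namespace Bootstrap

open Set
open scoped ENNReal

lemma _root_.List.two_le_countP_iff {α : Type*} {l : List α} (hl : l.Nodup) {p : α → Bool} :
    2 ≤ l.countP p ↔ ∃ a ∈ l, ∃ b ∈ l, a ≠ b ∧ p a ∧ p b := by
  classical
  rw [List.countP_eq_length_filter, ← List.toFinset_card_of_nodup (hl.filter p),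
    List.toFinset_filter, show 2 = 1 + 1 from rfl, Nat.add_one_le_iff, Finset.one_lt_card]
  simp only [Finset.mem_filter, List.mem_toFinset]
  grind

lemma _root_.Int.forall_mem_Icc_of_iff_add_one {P : ℤ → Prop} {x₀ x₁ x : ℤ}
    (hx : x ∈ Icc x₀ x₁) (hP : P x) (hstep : ∀ t, x₀ ≤ t → t < x₁ → (P t ↔ P (t + 1))) :
    ∀ t ∈ Icc x₀ x₁, P t := by
  obtain ⟨hx₀, hx₁⟩ := hx
  rintro t ⟨ht₀, ht₁⟩
  rcases le_total x t with hxt | htx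
  · induction t, hxt using Int.leInduction with
    | base => exact hP
    | succ t hxt ih => exact (hstep t (by omega) (by omega)).1 (ih (by omega) (by omega))
  · induction t, htx using Int.leInductionDown with
    | base => exact hP
    | pred t htx ih =>
      exact (hstep (t - 1) (by omega) (by omega)).2 (by simpa using ih (by omega) (by omega))

def l1Dist (u v : ℤ × ℤ) : ℕ := (u.1 - v.1).natAbs + (u.2 - v.2).natAbs

lemma mem_neighbors {w v : ℤ × ℤ} : w ∈ neighbors v ↔ Adj w v := by
  obtain ⟨w₁, w₂⟩ := w
  simp only [neighbors, List.mem_cons, List.not_mem_nil, or_false, Prod.mk.injEq, Adj]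
  constructor <;> omega

lemma neighbors_nodup (v : ℤ × ℤ) : (neighbors v).Nodup := by
  simp [neighbors]
  omega

lemma mem_Icc_iff {a b v : ℤ × ℤ} :
    v ∈ Icc a b ↔ a.1 ≤ v.1 ∧ v.1 ≤ b.1 ∧ a.2 ≤ v.2 ∧ v.2 ≤ b.2 := by
  simp only [mem_Icc, Prod.le_def]
  tauto

/-! ### The final configuration as a least closed set -/

section Dynamics

variable {B : Finset (ℤ × ℤ)} {σ τ : ℤ × ℤ → Bool}

lemma bstep_eq_true {v : ℤ × ℤ} :
    bstep B σ v = true ↔ σ v = true ∨ v ∈ B ∧ ∃ w₁ w₂, w₁ ≠ w₂ ∧ Adj w₁ v ∧ Adj w₂ v ∧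
      (w₁ ∈ B ∧ σ w₁ = true) ∧ (w₂ ∈ B ∧ σ w₂ = true) := by
  simp only [bstep, Bool.or_eq_true, Bool.and_eq_true, decide_eq_true_eq,
    List.two_le_countP_iff (neighbors_nodup v), mem_neighbors]
  grind

lemma bstep_of_not_mem {v : ℤ × ℤ} (hv : v ∉ B) : bstep B σ v = σ v := by
  simp [bstep, hv]

lemma le_bstep (σ : ℤ × ℤ → Bool) : σ ≤ bstep B σ := fun _ => Bool.left_le_or _ _

lemma bstep_mono : Monotone (bstep B) := fun σ τ h _ => by
  have h' : ∀ w, σ w = true → τ w = true := fun w => Bool.le_iff_imp.1 (h w)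
  simp only [Bool.le_iff_imp, bstep_eq_true]
  grind

lemma exists_isFixedPt_iterate_bstep (σ : ℤ × ℤ → Bool) :
    ∃ m ≤ B.card, Function.IsFixedPt (bstep B) ((bstep B)^[m] σ) := by
  set S := fun n => B.filter ((bstep B)^[n] σ · = true)
  have hS : Monotone S := fun m n hmn => Finset.monotone_filter_right B fun v _ =>
    Bool.le_iff_imp.1 (bstep_mono.monotone_iterate_of_le_map (le_bstep σ) hmn v)
  -- pigeonhole: the `B.card + 2` sets `S n` take at most `B.card + 1` sizes
  obtain ⟨i, hi, j, hj, hne, hij⟩ := Finset.exists_ne_map_eq_of_card_lt_of_maps_to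
    (s := Finset.range (B.card + 2)) (t := Finset.range (B.card + 1)) (by simp)
    (f := fun n => (S n).card)
    (fun n _ => by simpa [Nat.lt_succ_iff] using Finset.card_filter_le _ _)
  wlog hlt : i < j generalizing i j
  · exact this j hj i hi hne.symm hij.symm (by omega)
  have hstab : S (i + 1) = S i := (Finset.eq_of_subset_of_card_le (hS (Nat.le_succ i))
    (hij ▸ Finset.card_le_card (hS hlt))).symm
  refine ⟨i, by simp at hj; omega, funext fun v => ?_⟩
  rw [← Function.iterate_succ_apply' (bstep B) i σ]
  by_cases hv : v ∈ B
  · have hmem := congrArg (v ∈ ·) hstab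
    simp only [S, Finset.mem_filter, hv, true_and, eq_iff_iff] at hmem
    exact Bool.eq_iff_iff.2 hmem
  · rw [Function.iterate_succ_apply', bstep_of_not_mem hv]

lemma isFixedPt_bfinal (B : Finset (ℤ × ℤ)) (σ : ℤ × ℤ → Bool) :
    Function.IsFixedPt (bstep B) (bfinal B σ) := by
  obtain ⟨m, hm, hfix⟩ := exists_isFixedPt_iterate_bstep (B := B) σ
  rw [bfinal, show B.card + 1 = (B.card + 1 - m) + m by omega, Function.iterate_add_apply]
  exact (hfix.iterate _).symm ▸ hfix

def finalSet (B : Finset (ℤ × ℤ)) (σ : ℤ × ℤ → Bool) : Set (ℤ × ℤ) := {v | bfinal B σ v = true}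

def IsBootstrapClosed (B I : Set (ℤ × ℤ)) : Prop :=
  ∀ v ∈ B, ∀ w₁ ∈ B, ∀ w₂ ∈ B, w₁ ≠ w₂ → Adj w₁ v → Adj w₂ v → w₁ ∈ I → w₂ ∈ I → v ∈ I

lemma isBootstrapClosed_finalSet (B : Finset (ℤ × ℤ)) (σ : ℤ × ℤ → Bool) :
    IsBootstrapClosed B (finalSet B σ) := by
  intro v hv w₁ hw₁ w₂ hw₂ hne h₁ h₂ hI₁ hI₂
  show bfinal B σ v = true
  rw [← isFixedPt_bfinal B σ, bstep_eq_true]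
  exact Or.inr ⟨hv, w₁, w₂, hne, h₁, h₂, ⟨hw₁, hI₁⟩, ⟨hw₂, hI₂⟩⟩

lemma subset_finalSet : {v | σ v = true} ⊆ finalSet B σ := fun v hv =>
  Bool.le_iff_imp.1 (bstep_mono.monotone_iterate_of_le_map (le_bstep σ) (Nat.zero_le _) v) hv

lemma finalSet_subset {I : Set (ℤ × ℤ)} (h₀ : {v | σ v = true} ⊆ I)
    (hI : IsBootstrapClosed B I) : finalSet B σ ⊆ I := by
  suffices ∀ n, {v | (bstep B)^[n] σ v = true} ⊆ I from this _
  intro n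
  induction n with
  | zero => exact h₀
  | succ n ih =>
    intro v hv
    change (bstep B)^[n + 1] σ v = true at hv
    rw [Function.iterate_succ_apply', bstep_eq_true] at hv
    obtain hv | ⟨hvB, w₁, w₂, hne, h₁, h₂, ⟨hB₁, hσ₁⟩, hB₂, hσ₂⟩ := hv
    · exact ih hv
    · exact hI v hvB w₁ hB₁ w₂ hB₂ hne h₁ h₂ (ih hσ₁) (ih hσ₂)

lemma finalSet_mono (h : σ ≤ τ) : finalSet B σ ⊆ finalSet B τ :=
  finalSet_subset (fun v hv => subset_finalSet (Bool.le_iff_imp.1 (h v) hv))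
    (isBootstrapClosed_finalSet B τ)

end Dynamics

/-! ### Closed sets and rectangles -/

section Closed

variable {B I : Set (ℤ × ℤ)}

lemma isBootstrapClosed_Icc (B : Set (ℤ × ℤ)) (a b : ℤ × ℤ) : IsBootstrapClosed B (Icc a b) := by
  intro v _ w₁ _ w₂ _ hne h₁ h₂ hw₁ hw₂
  have : w₁.1 ≠ w₂.1 ∨ w₁.2 ≠ w₂.2 := by
    by_contra! h
    exact hne (Prod.ext h.1 h.2)
  simp only [mem_Icc_iff, Adj] at *
  omega

lemma IsBootstrapClosed.diff {D : Set (ℤ × ℤ)} (hI : IsBootstrapClosed B I)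
    (hD : ∀ v ∈ D, ∀ w₁ w₂, Adj w₁ v → Adj w₂ v → w₁ ∉ D → w₂ ∉ D → w₁ = w₂) :
    IsBootstrapClosed B (I \ D) := fun v hv w₁ hw₁ w₂ hw₂ hne h₁ h₂ hI₁ hI₂ =>
  ⟨hI v hv w₁ hw₁ w₂ hw₂ hne h₁ h₂ hI₁.1 hI₂.1, fun hvD => hne (hD v hvD w₁ w₂ h₁ h₂ hI₁.2 hI₂.2)⟩

lemma IsBootstrapClosed.row_subset (hI : IsBootstrapClosed B I) {x₀ x₁ x y y' : ℤ}
    (hy : (y - y').natAbs = 1) (hB : ∀ t ∈ Icc x₀ x₁, (t, y) ∈ B ∧ (t, y') ∈ B)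
    (hsupp : ∀ t ∈ Icc x₀ x₁, (t, y') ∈ I) (hx : x ∈ Icc x₀ x₁) (hxy : (x, y) ∈ I) :
    ∀ t ∈ Icc x₀ x₁, (t, y) ∈ I := by
  refine Int.forall_mem_Icc_of_iff_add_one hx hxy fun t ht₀ ht₁ => ⟨fun h => ?_, fun h => ?_⟩
  · refine hI _ (hB (t + 1) ⟨?_, ?_⟩).1 _ (hB t ⟨?_, ?_⟩).1 _ (hB (t + 1) ⟨?_, ?_⟩).2 ?_ ?_ ?_ h
      (hsupp (t + 1) ⟨?_, ?_⟩)
    all_goals (try simp only [Adj, ne_eq, Prod.mk.injEq]); omega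
  · refine hI _ (hB t ⟨?_, ?_⟩).1 _ (hB (t + 1) ⟨?_, ?_⟩).1 _ (hB t ⟨?_, ?_⟩).2 ?_ ?_ ?_ h
      (hsupp t ⟨?_, ?_⟩)
    all_goals (try simp only [Adj, ne_eq, Prod.mk.injEq]); omega

lemma IsBootstrapClosed.Icc_subset_of_cross (hI : IsBootstrapClosed B I) {a b p : ℤ × ℤ}
    (hp : p ∈ Icc a b) (hB : Icc a b ⊆ B) (hrow : ∀ x ∈ Icc a.1 b.1, (x, p.2) ∈ I)
    (hcol : ∀ y ∈ Icc a.2 b.2, (p.1, y) ∈ I) : Icc a b ⊆ I := by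
  rw [mem_Icc_iff] at hp
  have hB' : ∀ x ∈ Icc a.1 b.1, ∀ y ∈ Icc a.2 b.2, (x, y) ∈ B := fun x hx y hy =>
    hB (mem_Icc_iff.2 ⟨hx.1, hx.2, hy.1, hy.2⟩)
  have hrows : ∀ y ∈ Icc a.2 b.2, ∀ x ∈ Icc a.1 b.1, (x, y) ∈ I := by
    refine Int.forall_mem_Icc_of_iff_add_one ⟨hp.2.2.1, hp.2.2.2⟩ hrow
      fun y hy₀ hy₁ => ⟨fun h => ?_, fun h => ?_⟩
    · exact hI.row_subset (y' := y) (by omega)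
        (fun x hx => ⟨hB' x hx _ ⟨by omega, by omega⟩, hB' x hx _ ⟨by omega, by omega⟩⟩) h
        ⟨hp.1, hp.2.1⟩ (hcol _ ⟨by omega, by omega⟩)
    · exact hI.row_subset (y' := y + 1) (by omega)
        (fun x hx => ⟨hB' x hx _ ⟨by omega, by omega⟩, hB' x hx _ ⟨by omega, by omega⟩⟩) h
        ⟨hp.1, hp.2.1⟩ (hcol _ ⟨by omega, by omega⟩)
  intro v hv
  rw [mem_Icc_iff] at hv
  exact hrows v.2 ⟨hv.2.2.1, hv.2.2.2⟩ v.1 ⟨hv.1, hv.2.1⟩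

lemma mem_union_of_mem_cross {a b a' b' p v : ℤ × ℤ} (hp : p ∈ Icc a b) (hp' : p ∈ Icc a' b')
    (hv : v ∈ Icc (a ⊓ a') (b ⊔ b')) (hvp : v.1 = p.1 ∨ v.2 = p.2) :
    v ∈ Icc a b ∪ Icc a' b' := by
  simp only [mem_union, mem_Icc_iff, Prod.fst_inf, Prod.snd_inf, Prod.fst_sup, Prod.snd_sup] at *
  omega

lemma IsBootstrapClosed.Icc_inf_sup_subset_of_mem (hI : IsBootstrapClosed B I)
    {a b a' b' p : ℤ × ℤ} (hp : p ∈ Icc a b) (hp' : p ∈ Icc a' b') (h : Icc a b ⊆ I)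
    (h' : Icc a' b' ⊆ I) (hB : Icc (a ⊓ a') (b ⊔ b') ⊆ B) : Icc (a ⊓ a') (b ⊔ b') ⊆ I := by
  have hpq : p ∈ Icc (a ⊓ a') (b ⊔ b') := by
    simp only [mem_Icc_iff, Prod.fst_inf, Prod.snd_inf, Prod.fst_sup, Prod.snd_sup] at *
    omega
  refine hI.Icc_subset_of_cross hpq hB (fun x hx => ?_) (fun y hy => ?_)
  all_goals
    refine union_subset h h' (mem_union_of_mem_cross hp hp' ?_ (by simp))
    simp only [mem_Icc, Prod.le_def, Prod.fst_inf, Prod.snd_inf, Prod.fst_sup, Prod.snd_sup] at *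
    omega

lemma mem_or_eq_of_mem_cross {a b c m v : ℤ × ℤ} (hc : c ∈ Icc a b) (hcm : l1Dist c m ≤ 1)
    (hv : v ∈ Icc (a ⊓ m) (b ⊔ m)) (hvc : v.1 = c.1 ∨ v.2 = c.2) : v ∈ Icc a b ∨ v = m := by
  simp only [mem_Icc_iff, Prod.fst_inf, Prod.snd_inf, Prod.fst_sup, Prod.snd_sup, Prod.ext_iff,
    l1Dist] at *
  omega

lemma IsBootstrapClosed.Icc_inf_sup_subset_of_l1Dist_le_one (hI : IsBootstrapClosed B I)
    {a b c m : ℤ × ℤ} (hc : c ∈ Icc a b) (hcm : l1Dist c m ≤ 1) (h : Icc a b ⊆ I) (hm : m ∈ I)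
    (hB : Icc (a ⊓ m) (b ⊔ m) ⊆ B) : Icc (a ⊓ m) (b ⊔ m) ⊆ I := by
  have hc' : c ∈ Icc (a ⊓ m) (b ⊔ m) := by
    simp only [mem_Icc_iff, Prod.fst_inf, Prod.snd_inf, Prod.fst_sup, Prod.snd_sup] at *
    omega
  have hcross : ∀ v ∈ Icc (a ⊓ m) (b ⊔ m), v.1 = c.1 ∨ v.2 = c.2 → v ∈ I := fun v hv hvc =>
    (mem_or_eq_of_mem_cross hc hcm hv hvc).elim (fun hv => h hv) (fun hv => hv ▸ hm)
  refine hI.Icc_subset_of_cross hc' hB (fun x hx => hcross _ ?_ (by simp))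
    (fun y hy => hcross _ ?_ (by simp))
  all_goals
    simp only [mem_Icc, Prod.le_def, Prod.fst_inf, Prod.snd_inf, Prod.fst_sup, Prod.snd_sup] at *
    omega

lemma exists_mid_of_l1Dist_le_two {c c' : ℤ × ℤ} (h : l1Dist c c' ≤ 2) :
    ∃ m ∈ Icc (c ⊓ c') (c ⊔ c'), l1Dist c m ≤ 1 ∧ l1Dist m c' ≤ 1 ∧
      (m = c ∨ c ≠ c' ∧ Adj c m ∧ Adj c' m) := by
  by_cases h₁ : l1Dist c c' ≤ 1
  · refine ⟨c, ?_, by simp [l1Dist], h₁, Or.inl rfl⟩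
    simp only [mem_Icc_iff, Prod.fst_inf, Prod.snd_inf, Prod.fst_sup, Prod.snd_sup]
    omega
  rcases lt_trichotomy c.1 c'.1 with h₂ | h₂ | h₂ <;>
    [refine ⟨(c.1 + 1, c.2), ?_⟩; refine ⟨(c.1, (c.2 + c'.2) / 2), ?_⟩;
      refine ⟨(c.1 - 1, c.2), ?_⟩] <;>
  · simp only [mem_Icc_iff, Prod.fst_inf, Prod.snd_inf, Prod.fst_sup, Prod.snd_sup, l1Dist, Adj,
      ne_eq, Prod.ext_iff] at *
    omega

lemma IsBootstrapClosed.Icc_inf_sup_subset (hI : IsBootstrapClosed B I)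
    {a b a' b' c c' : ℤ × ℤ} (hc : c ∈ Icc a b) (hc' : c' ∈ Icc a' b') (hcc' : l1Dist c c' ≤ 2)
    (h : Icc a b ⊆ I) (h' : Icc a' b' ⊆ I) (hB : Icc (a ⊓ a') (b ⊔ b') ⊆ B) :
    Icc (a ⊓ a') (b ⊔ b') ⊆ I := by
  obtain ⟨m, hm, hcm, hmc', hm'⟩ := exists_mid_of_l1Dist_le_two hcc'
  have hcoord := And.intro (mem_Icc_iff.1 hc) (mem_Icc_iff.1 hc')
  simp only [mem_Icc_iff, Prod.fst_inf, Prod.snd_inf, Prod.fst_sup, Prod.snd_sup] at hm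
  have hmI : m ∈ I := by
    rcases hm' with rfl | ⟨hne, h₁, h₂⟩
    · exact h hc
    · refine hI m (hB ?_) c (hB ?_) c' (hB ?_) hne h₁ h₂ (h hc) (h' hc')
      all_goals
        simp only [mem_Icc_iff, Prod.fst_inf, Prod.snd_inf, Prod.fst_sup, Prod.snd_sup]
        omega
  -- adjoin `m` and then `c'` to `[a, b]`; the result meets `[a', b']` at `c'`
  have h₁ : Icc (a ⊓ m) (b ⊔ m) ⊆ I := hI.Icc_inf_sup_subset_of_l1Dist_le_one hc hcm h hmI
    ((Icc_subset_Icc ?_ ?_).trans hB)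
  have h₂ : Icc (a ⊓ m ⊓ c') (b ⊔ m ⊔ c') ⊆ I := hI.Icc_inf_sup_subset_of_l1Dist_le_one
    (c := m) ?_ hmc' h₁ (h' hc') ((Icc_subset_Icc ?_ ?_).trans hB)
  · convert hI.Icc_inf_sup_subset_of_mem (p := c') ?_ hc' h₂ h' ((Icc_subset_Icc ?_ ?_).trans hB)
      using 2
    all_goals
      simp only [mem_Icc_iff, Prod.le_def, Prod.ext_iff, Prod.fst_inf, Prod.snd_inf,
        Prod.fst_sup, Prod.snd_sup]
      omega
  all_goals
    simp only [mem_Icc_iff, Prod.le_def, Prod.fst_inf, Prod.snd_inf, Prod.fst_sup, Prod.snd_sup]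
    omega

end Closed

/-! ### The Aizenman–Lebowitz rectangles process -/

/-- A rectangle, given by its lower-left and upper-right corners. -/
abbrev Rect := (ℤ × ℤ) × (ℤ × ℤ)

def Rect.diam (r : Rect) : ℤ := max (r.2.1 - r.1.1) (r.2.2 - r.1.2)

noncomputable def Rect.hull (r r' : Rect) : Rect := (r.1 ⊓ r'.1, r.2 ⊔ r'.2)

lemma Rect.diam_hull_le {r r' : Rect} {c c' : ℤ × ℤ} (hc : c ∈ Icc r.1 r.2)
    (hc' : c' ∈ Icc r'.1 r'.2) (hcc' : l1Dist c c' ≤ 2) :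
    (r.hull r').diam ≤ r.diam + r'.diam + 2 := by
  simp only [mem_Icc_iff] at hc hc'
  simp only [l1Dist] at hcc'
  simp only [Rect.diam, Rect.hull, Prod.fst_inf, Prod.snd_inf, Prod.fst_sup, Prod.snd_sup]
  omega

noncomputable def restrictIcc (σ : ℤ × ℤ → Bool) (a b : ℤ × ℤ) : ℤ × ℤ → Bool :=
  fun v => σ v && decide (v ∈ Finset.Icc a b)

lemma setOf_restrictIcc (σ : ℤ × ℤ → Bool) (a b : ℤ × ℤ) :
    {v | restrictIcc σ a b v = true} = {v | σ v = true} ∩ Icc a b := by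
  ext v
  simp [restrictIcc]

lemma restrictIcc_mono (σ : ℤ × ℤ → Bool) {a b a' b' : ℤ × ℤ} (h : Icc a b ⊆ Icc a' b') :
    restrictIcc σ a b ≤ restrictIcc σ a' b' := fun v => by
  simp only [restrictIcc, Bool.le_iff_imp, Bool.and_eq_true, decide_eq_true_eq,
    ← Finset.coe_Icc] at h ⊢
  exact fun hv => ⟨hv.1, h hv.2⟩

def InternallySpanned (B : Finset (ℤ × ℤ)) (σ : ℤ × ℤ → Bool) (r : Rect) : Prop :=
  r.1 ≤ r.2 ∧ Icc r.1 r.2 ⊆ B ∧ Icc r.1 r.2 ⊆ finalSet B (restrictIcc σ r.1 r.2)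

/-- The Aizenman–Lebowitz property. -/
def SpannedAtAllScales (B : Finset (ℤ × ℤ)) (σ : ℤ × ℤ → Bool) (r : Rect) : Prop :=
  ∀ l : ℤ, 0 < l → l ≤ r.diam → ∃ r', InternallySpanned B σ r' ∧ l ≤ r'.diam ∧ r'.diam ≤ 2 * l

def IsSpannedCover (B : Finset (ℤ × ℤ)) (σ : ℤ × ℤ → Bool) (T : Finset Rect) : Prop :=
  (∀ r ∈ T, InternallySpanned B σ r ∧ SpannedAtAllScales B σ r) ∧
    ∀ z ∈ B, σ z = true → ∃ r ∈ T, z ∈ Icc r.1 r.2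

def IsSeparated (T : Finset Rect) : Prop :=
  ∀ r ∈ T, ∀ r' ∈ T, r ≠ r' → ∀ c ∈ Icc r.1 r.2, ∀ c' ∈ Icc r'.1 r'.2, 2 < l1Dist c c'

section Rectangles

variable {B : Finset (ℤ × ℤ)} {σ : ℤ × ℤ → Bool} {lo hi : ℤ × ℤ}

lemma internallySpanned_singleton {z : ℤ × ℤ} (hz : z ∈ B) (hσ : σ z = true) :
    InternallySpanned B σ (z, z) := by
  refine ⟨le_rfl, by simpa using hz, ?_⟩
  rw [Icc_self, singleton_subset_iff]
  exact subset_finalSet (by simp [restrictIcc, hσ])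

lemma InternallySpanned.hull (hB : (B : Set (ℤ × ℤ)) = Icc lo hi) {r r' : Rect}
    (hr : InternallySpanned B σ r) (hr' : InternallySpanned B σ r') {c c' : ℤ × ℤ}
    (hc : c ∈ Icc r.1 r.2) (hc' : c' ∈ Icc r'.1 r'.2) (hcc' : l1Dist c c' ≤ 2) :
    InternallySpanned B σ (r.hull r') := by
  obtain ⟨hle, hrB, hrI⟩ := hr
  obtain ⟨hle', hrB', hrI'⟩ := hr'
  rw [hB, Icc_subset_Icc_iff hle] at hrB
  rw [hB, Icc_subset_Icc_iff hle'] at hrB'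
  have hhullB : Icc (r.1 ⊓ r'.1) (r.2 ⊔ r'.2) ⊆ B :=
    hB ▸ Icc_subset_Icc (le_inf hrB.1 hrB'.1) (sup_le hrB.2 hrB'.2)
  refine ⟨inf_le_left.trans (hle.trans le_sup_left), hhullB,
    (isBootstrapClosed_finalSet B _).Icc_inf_sup_subset hc hc' hcc' ?_ ?_ hhullB⟩
  · exact hrI.trans (finalSet_mono (restrictIcc_mono σ (Icc_subset_Icc inf_le_left le_sup_left)))
  · exact hrI'.trans
      (finalSet_mono (restrictIcc_mono σ (Icc_subset_Icc inf_le_right le_sup_right)))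

lemma SpannedAtAllScales.hull {r r' : Rect} (hr : SpannedAtAllScales B σ r)
    (hr' : SpannedAtAllScales B σ r') (hhull : InternallySpanned B σ (r.hull r'))
    (hdiam : (r.hull r').diam ≤ r.diam + r'.diam + 2) : SpannedAtAllScales B σ (r.hull r') := by
  intro l hl hlr
  rcases le_or_gt l r.diam with h | h
  · exact hr l hl h
  rcases le_or_gt l r'.diam with h' | h'
  · exact hr' l hl h'
  exact ⟨_, hhull, hlr, by omega⟩

lemma isSpannedCover_singletons (B : Finset (ℤ × ℤ)) (σ : ℤ × ℤ → Bool) :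
    IsSpannedCover B σ ((B.filter (σ · = true)).image fun z => (z, z)) := by
  refine ⟨fun r hr => ?_, fun z hz hσ => ⟨(z, z), by simp [hz, hσ], by simp⟩⟩
  obtain ⟨z, hz, rfl⟩ := Finset.mem_image.1 hr
  rw [Finset.mem_filter] at hz
  refine ⟨internallySpanned_singleton hz.1 hz.2, fun l hl hlr => ?_⟩
  simp only [Rect.diam, sub_self, max_self] at hlr
  omega

lemma IsSpannedCover.merge (hB : (B : Set (ℤ × ℤ)) = Icc lo hi) {T : Finset Rect}
    (hT : IsSpannedCover B σ T) {r r' : Rect} (hr : r ∈ T) (hr' : r' ∈ T) {c c' : ℤ × ℤ}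
    (hc : c ∈ Icc r.1 r.2) (hc' : c' ∈ Icc r'.1 r'.2) (hcc' : l1Dist c c' ≤ 2) :
    IsSpannedCover B σ (insert (r.hull r') ((T.erase r).erase r')) := by
  have hhull := (hT.1 r hr).1.hull hB (hT.1 r' hr').1 hc hc' hcc'
  refine ⟨fun s hs => ?_, fun z hz hσ => ?_⟩
  · rcases Finset.mem_insert.1 hs with rfl | hs
    · exact ⟨hhull, (hT.1 r hr).2.hull (hT.1 r' hr').2 hhull (Rect.diam_hull_le hc hc' hcc')⟩
    · exact hT.1 s (Finset.mem_of_mem_erase (Finset.mem_of_mem_erase hs))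
  obtain ⟨s, hs, hzs⟩ := hT.2 z hz hσ
  by_cases hs' : s = r ∨ s = r'
  · refine ⟨_, Finset.mem_insert_self _ _, ?_⟩
    rcases hs' with rfl | rfl
    exacts [Icc_subset_Icc inf_le_left le_sup_left hzs,
      Icc_subset_Icc inf_le_right le_sup_right hzs]
  · push Not at hs'
    exact ⟨s, Finset.mem_insert_of_mem (Finset.mem_erase.2 ⟨hs'.2, Finset.mem_erase.2 ⟨hs'.1, hs⟩⟩),
      hzs⟩

/-- A spanned cover of minimal cardinality is separated, since merging two close rectangles
would give a smaller one. -/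
lemma exists_separated_spannedCover (hB : (B : Set (ℤ × ℤ)) = Icc lo hi) (σ : ℤ × ℤ → Bool) :
    ∃ T, IsSpannedCover B σ T ∧ IsSeparated T := by
  obtain ⟨T, hT, hmin⟩ := (InvImage.wf Finset.card wellFounded_lt).has_min
    {T | IsSpannedCover B σ T} ⟨_, isSpannedCover_singletons B σ⟩
  refine ⟨T, hT, fun r hr r' hr' hne c hc c' hc' => ?_⟩
  by_contra! hcc'
  have hmin := hmin _ (hT.merge hB hr hr' hc hc' hcc')
  simp only [InvImage, not_lt] at hmin
  have := Finset.card_insert_le (r.hull r') ((T.erase r).erase r')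
  have := Finset.card_erase_lt_of_mem (Finset.mem_erase.2 ⟨hne.symm, hr'⟩)
  have := Finset.card_erase_lt_of_mem hr
  omega

lemma IsSpannedCover.exists_mem_of_mem_finalSet {T : Finset Rect} (hT : IsSpannedCover B σ T)
    (hsep : IsSeparated T) {v : ℤ × ℤ} (hvB : v ∈ B) (hv : v ∈ finalSet B σ) :
    ∃ r ∈ T, v ∈ Icc r.1 r.2 := by
  refine finalSet_subset (I := {v | v ∈ B → ∃ r ∈ T, v ∈ Icc r.1 r.2})
    (fun z hz hzB => hT.2 z hzB hz) ?_ hv hvB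
  intro v hvB w₁ hw₁ w₂ hw₂ hne h₁ h₂ hI₁ hI₂ _
  obtain ⟨r₁, hr₁, hw₁r⟩ := hI₁ hw₁
  obtain ⟨r₂, hr₂, hw₂r⟩ := hI₂ hw₂
  obtain rfl | hne' := eq_or_ne r₁ r₂
  · exact ⟨r₁, hr₁, isBootstrapClosed_Icc _ _ _ v hvB w₁ hw₁ w₂ hw₂ hne h₁ h₂ hw₁r hw₂r⟩
  · have := hsep r₁ hr₁ r₂ hr₂ hne' w₁ hw₁r w₂ hw₂r
    simp only [Adj, l1Dist] at h₁ h₂ this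
    omega

end Rectangles

/-! ### Double lines and the wide-cluster event -/

section Clusters

variable {B : Finset (ℤ × ℤ)} {σ : ℤ × ℤ → Bool} {lo hi : ℤ × ℤ}

lemma forall_mem_of_connectedIn {C : Finset (ℤ × ℤ)} (hC : ConnectedIn C)
    {R : Set (ℤ × ℤ)} {u : ℤ × ℤ} (hu : u ∈ C) (huR : u ∈ R)
    (hR : ∀ x ∈ C, ∀ y ∈ C, Adj x y → x ∈ R → y ∈ R) : ∀ v ∈ C, v ∈ R := by
  intro v hv
  obtain ⟨l, hlC, hl, rfl⟩ := hC u hu v hv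
  have hmem : ∀ x ∈ u :: l, x ∈ C := fun x hx => (List.mem_cons.1 hx).elim (· ▸ hu) (hlC x)
  have hl' : List.IsChain (fun x y => x ∈ C ∧ y ∈ C ∧ Adj x y) (u :: l) :=
    hl.imp_of_mem_imp fun x y hx hy hxy => ⟨hmem x hx, hmem y hy, hxy⟩
  have := hl'.cons_induction (· ∈ R) l (fun x y hxy hx => hR x hxy.1 y hxy.2.1 hxy.2.2 hx) huR
  exact (List.mem_cons.1 (List.getLast_mem _)).elim (· ▸ huR) (this _)

/-- Two consecutive columns (`π = Prod.fst`) or rows (`π = Prod.snd`). -/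
def doubleLine (π : ℤ × ℤ → ℤ) (c : ℤ) : Set (ℤ × ℤ) := {v | π v = c ∨ π v = c + 1}

lemma doubleLine_neighbors {π : ℤ × ℤ → ℤ} (hπ : π = Prod.fst ∨ π = Prod.snd) (c : ℤ) :
    ∀ v ∈ doubleLine π c, ∀ w₁ w₂, Adj w₁ v → Adj w₂ v →
      w₁ ∉ doubleLine π c → w₂ ∉ doubleLine π c → w₁ = w₂ := by
  intro v hv w₁ w₂ h₁ h₂ hw₁ hw₂
  rcases hπ with rfl | rfl <;>
  · simp only [doubleLine, mem_ofPred_eq, Adj] at hv h₁ h₂ hw₁ hw₂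
    ext <;> omega

/-- Otherwise the rectangle minus the double line would be a closed set containing the initial
2s of the rectangle. -/
lemma InternallySpanned.exists_mem_doubleLine {r : Rect} (hr : InternallySpanned B σ r)
    {π : ℤ × ℤ → ℤ} (hπ : π = Prod.fst ∨ π = Prod.snd) {c : ℤ}
    (hrD : (Icc r.1 r.2 ∩ doubleLine π c).Nonempty) :
    ∃ z ∈ Icc r.1 r.2 ∩ doubleLine π c, σ z = true := by
  by_contra! h
  have hP : finalSet B (restrictIcc σ r.1 r.2) ⊆ Icc r.1 r.2 \ doubleLine π c :=
    finalSet_subset (fun z hz => by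
        rw [setOf_restrictIcc] at hz
        exact ⟨hz.2, fun hzD => h z ⟨hz.2, hzD⟩ hz.1⟩)
      ((isBootstrapClosed_Icc _ _ _).diff (doubleLine_neighbors hπ c))
  obtain ⟨z, hzr, hzD⟩ := hrD
  exact (hP (hr.2.2 hzr)).2 hzD

lemma InternallySpanned.le_card_filter {r : Rect} (hr : InternallySpanned B σ r)
    {π : ℤ × ℤ → ℤ} (hπ : π = Prod.fst ∨ π = Prod.snd) {n : ℕ}
    (hn : 2 * n ≤ π r.2 - π r.1 + 1) :
    n ≤ ((Finset.Icc r.1 r.2).filter (σ · = true)).card := by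
  have hline : ∀ k < n, ∃ z ∈ Icc r.1 r.2 ∩ doubleLine π (π r.1 + 2 * k), σ z = true := by
    intro k hk
    refine hr.exists_mem_doubleLine hπ ?_
    have hle := Prod.le_def.1 hr.1
    rcases hπ with rfl | rfl
    · refine ⟨(r.1.1 + 2 * k, r.1.2), ?_⟩
      simp only [mem_inter_iff, mem_Icc_iff, doubleLine, mem_ofPred_eq, true_or, and_true]
      omega
    · refine ⟨(r.1.1, r.1.2 + 2 * k), ?_⟩
      simp only [mem_inter_iff, mem_Icc_iff, doubleLine, mem_ofPred_eq, true_or, and_true]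
      omega
  choose! z hz hσz using hline
  simpa using Finset.card_le_card_of_injOn z (s := Finset.range n)
    (fun k hk => by
      simp only [Finset.coe_range, mem_Iio] at hk
      simpa [← Finset.coe_Icc, hσz k hk] using (hz k hk).1)
    (fun k hk j hj hkj => by
      simp only [Finset.coe_range, mem_Iio] at hk hj
      have := (hz k hk).2
      have := (hz j hj).2
      simp only [doubleLine, mem_ofPred_eq, hkj] at *
      omega)

noncomputable def square (v : ℤ × ℤ) (k : ℕ) : Finset (ℤ × ℤ) :=
  Finset.Icc v (v + ((k : ℤ), (k : ℤ)))

lemma card_square (v : ℤ × ℤ) (k : ℕ) : (square v k).card = (k + 1) ^ 2 := by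
  rw [square, Finset.card_Icc_prod]
  have h (a : ℤ) : (a + k + 1 - a).toNat = k + 1 := by omega
  simp only [Prod.fst_add, Prod.snd_add, Int.card_Icc, h, sq]

lemma InternallySpanned.exists_subset_square {r : Rect} (hr : InternallySpanned B σ r) {n : ℕ}
    (hn : 2 * n ≤ r.diam) (hdiam : r.diam ≤ 4 * n) :
    ∃ S ∈ (square r.1 (4 * n)).powersetCard n, ∀ z ∈ S, σ z = true := by
  simp only [Rect.diam] at hn hdiam
  obtain ⟨π, hπ, hwide⟩ : ∃ π : ℤ × ℤ → ℤ, (π = Prod.fst ∨ π = Prod.snd) ∧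
      2 * n ≤ π r.2 - π r.1 + 1 := by
    rcases le_total (r.2.2 - r.1.2) (r.2.1 - r.1.1) with h | h
    · exact ⟨Prod.fst, Or.inl rfl, by omega⟩
    · exact ⟨Prod.snd, Or.inr rfl, by omega⟩
  obtain ⟨S, hS, hcard⟩ := Finset.exists_subset_card_eq (hr.le_card_filter hπ hwide)
  refine ⟨S, Finset.mem_powersetCard.2 ⟨fun z hz => ?_, hcard⟩,
    fun z hz => (Finset.mem_filter.1 (hS hz)).2⟩
  have hz := (Finset.mem_filter.1 (hS hz)).1
  simp only [square, Finset.mem_Icc, Prod.le_def, Prod.fst_add, Prod.snd_add] at hz ⊢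
  omega

theorem exists_subset_square_of_wide_cluster (hB : (B : Set (ℤ × ℤ)) = Icc lo hi) {n : ℕ}
    (hn : 0 < n) {C : Finset (ℤ × ℤ)} (hCB : C ⊆ B) (hC : ConnectedIn C)
    (hfin : ∀ v ∈ C, bfinal B σ v = true) {u v : ℤ × ℤ} (hu : u ∈ C) (hv : v ∈ C)
    (huv : 2 * n < max (u.1 - v.1).natAbs (u.2 - v.2).natAbs) :
    ∃ v₀ ∈ B, ∃ S ∈ (square v₀ (4 * n)).powersetCard n, ∀ z ∈ S, σ z = true := by
  obtain ⟨T, hT, hsep⟩ := exists_separated_spannedCover hB σ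
  obtain ⟨r, hr, hur⟩ := hT.exists_mem_of_mem_finalSet hsep (hCB hu) (hfin u hu)
  have hCr : ∀ w ∈ C, w ∈ Icc r.1 r.2 :=
    forall_mem_of_connectedIn hC hu hur fun x _ y hy hxy hxr => by
      obtain ⟨r', hr', hyr'⟩ := hT.exists_mem_of_mem_finalSet hsep (hCB hy) (hfin y hy)
      obtain rfl | hne := eq_or_ne r r'
      · exact hyr'
      · have := hsep r hr r' hr' hne x hxr y hyr'
        simp only [Adj, l1Dist] at hxy this
        omega
  have hdiam : 2 * (n : ℤ) ≤ r.diam := by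
    have := mem_Icc_iff.1 (hCr u hu)
    have := mem_Icc_iff.1 (hCr v hv)
    simp only [Rect.diam]
    omega
  obtain ⟨r', hr', hlo, hhi⟩ := (hT.1 r hr).2 (2 * n) (by omega) hdiam
  obtain ⟨S, hS, hσS⟩ := hr'.exists_subset_square hlo (by omega)
  exact ⟨r'.1, Finset.mem_coe.1 (hr'.2.1 (left_mem_Icc.2 hr'.1)), S, hS, hσS⟩

end Clusters

/-! ### The union bound -/

section Probability

variable {ι Ω : Type*} [MeasurableSpace Ω] {μ : Measure Ω} {X : ι → Ω → Bool} {p : ℝ≥0∞}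

lemma measure_forall_eq_true (hX : iIndepFun X μ) (hp : ∀ i, μ {ω | X i ω = true} = p)
    (S : Finset ι) : μ {ω | ∀ i ∈ S, X i ω = true} = p ^ S.card := by
  have h := hX.measure_inter_preimage_eq_mul S (sets := fun _ => {true}) fun _ _ => trivial
  simp only [preimage, mem_singleton_iff, hp, Finset.prod_const] at h
  rw [← h]
  congr 1
  ext ω
  simp

lemma measure_biUnion_forall_eq_true_le (hX : iIndepFun X μ)
    (hp : ∀ i, μ {ω | X i ω = true} = p) {𝓕 : Finset (Finset ι)} {n : ℕ}
    (h𝓕 : ∀ S ∈ 𝓕, S.card = n) :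
    μ (⋃ S ∈ 𝓕, {ω | ∀ i ∈ S, X i ω = true}) ≤ 𝓕.card * p ^ n :=
  calc _ ≤ ∑ S ∈ 𝓕, μ {ω | ∀ i ∈ S, X i ω = true} := measure_biUnion_finset_le _ _
    _ = ∑ S ∈ 𝓕, p ^ n := Finset.sum_congr rfl fun S hS => by
      rw [measure_forall_eq_true hX hp, h𝓕 S hS]
    _ = 𝓕.card * p ^ n := by simp

lemma one_sub_le_measure_of_compl_subset [IsProbabilityMeasure μ] {s t : Set Ω} {a : ℝ≥0∞}
    (hst : sᶜ ⊆ t) (ht : μ t ≤ a) : 1 - a ≤ μ s := by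
  have h : (1 : ℝ≥0∞) ≤ μ s + μ sᶜ := by simpa using measure_union_le (μ := μ) s sᶜ
  exact tsub_le_iff_right.2 (h.trans (by gcongr; exact (measure_mono hst).trans ht))

end Probability

lemma measure_exists_wide_cluster_le {Ω : Type*} [MeasurableSpace Ω] {μ : Measure Ω}
    {X : ℤ × ℤ → Ω → Bool} {p : ℝ≥0∞} (hX : iIndepFun X μ) (hp : ∀ v, μ {ω | X v ω = true} = p)
    {B : Finset (ℤ × ℤ)} {lo hi : ℤ × ℤ} (hB : (B : Set (ℤ × ℤ)) = Icc lo hi) {n : ℕ}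
    (hn : 0 < n) :
    μ {ω | ∃ C ⊆ B, ConnectedIn C ∧ (∀ v ∈ C, bfinal B (fun w => X w ω) v = true) ∧
        ∃ u ∈ C, ∃ v ∈ C, 2 * n < max (u.1 - v.1).natAbs (u.2 - v.2).natAbs} ≤
      (B.card * ((4 * n + 1) ^ 2).choose n : ℕ) * p ^ n := by
  set 𝓕 := B.biUnion fun v₀ => (square v₀ (4 * n)).powersetCard n
  calc _ ≤ μ (⋃ S ∈ 𝓕, {ω | ∀ z ∈ S, X z ω = true}) := by
        refine measure_mono fun ω ⟨C, hCB, hC, hfin, u, hu, v, hv, huv⟩ => ?_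
        obtain ⟨v₀, hv₀, S, hS, hσ⟩ :=
          exists_subset_square_of_wide_cluster hB hn hCB hC hfin hu hv huv
        exact mem_biUnion (Finset.mem_biUnion.2 ⟨v₀, hv₀, hS⟩) hσ
    _ ≤ 𝓕.card * p ^ n := measure_biUnion_forall_eq_true_le hX hp fun S hS => by
        obtain ⟨_, _, hS⟩ := Finset.mem_biUnion.1 hS
        exact (Finset.mem_powersetCard.1 hS).2
    _ ≤ _ := by
        gcongr
        refine Finset.card_biUnion_le.trans ?_
        simp [Finset.card_powersetCard, card_square]

lemma card_boxA_mul_pow_le {s : ℕ} {q : ℝ} (hq : 0 < q) (hq1 : q ≤ 1) :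
    ((boxA s q).card : ℝ) * q ^ (2 * s) ≤ 9 := by
  set m := ⌊q⁻¹ ^ s⌋
  have hm₀ : 0 ≤ m := Int.floor_nonneg.2 (by positivity)
  have hm : (m : ℝ) * q ^ s ≤ 1 :=
    calc (m : ℝ) * q ^ s ≤ q⁻¹ ^ s * q ^ s := by gcongr; exact Int.floor_le _
      _ = 1 := by rw [← mul_pow, inv_mul_cancel₀ hq.ne', one_pow]
  have hqs : q ^ s ≤ 1 := pow_le_one₀ hq.le hq1
  have hcard : ((boxA s q).card : ℝ) = (2 * m + 1) ^ 2 := by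
    rw [boxA, Finset.card_Icc_prod, Int.card_Icc, show m + 1 - -m = 2 * m + 1 by ring, ← sq,
      Nat.cast_pow, ← Int.cast_natCast, Int.toNat_of_nonneg (by omega)]
    push_cast
    ring
  calc ((boxA s q).card : ℝ) * q ^ (2 * s) = ((2 * m + 1) * q ^ s) ^ 2 := by rw [hcard]; ring
    _ ≤ 3 ^ 2 := pow_le_pow_left₀ (by positivity) (by nlinarith) 2
    _ = 9 := by norm_num

end Bootstrap

open Bootstrap

/-- With i.i.d. initial 2s of density `q` performing threshold-2 bootstrap percolation on 1s
internal to `[-⌊q^{-s}⌋, ⌊q^{-s}⌋]²`, with probability at least `1 - c₀ q^s` every connected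
set of final state-2 vertices has `ℓ∞`-diameter at most `16s`. -/
theorem stmt13 (s : ℕ) (hs : 1 ≤ s) :
    ∃ c0 : ℝ, 0 < c0 ∧ ∃ q0 : ℝ, 0 < q0 ∧ ∀ q : ℝ, 0 < q → q < q0 →
      ∀ (Ω : Type) [MeasurableSpace Ω] (μ : Measure Ω) [IsProbabilityMeasure μ]
        (X : ℤ × ℤ → Ω → Bool),
        iIndepFun X μ →
        (∀ v, μ {ω | X v ω = true} = ENNReal.ofReal q) →
        1 - ENNReal.ofReal (c0 * q ^ s) ≤
          μ {ω | ∀ C : Finset (ℤ × ℤ), C ⊆ boxA s q → ConnectedIn C →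
            (∀ v ∈ C, bfinal (boxA s q) (fun w => X w ω) v = true) →
            ∀ u ∈ C, ∀ v ∈ C,
              max (u.1 - v.1).natAbs (u.2 - v.2).natAbs ≤ 16 * s} := by
  set K := ((4 * (8 * s) + 1) ^ 2).choose (8 * s)
  have hK : 0 < K := Nat.choose_pos (by nlinarith)
  refine ⟨9 * K, by positivity, 1, one_pos, fun q hq hq1 Ω _ μ _ X hX hp => ?_⟩
  refine one_sub_le_measure_of_compl_subset ?_ ((measure_exists_wide_cluster_le hX hp
    (B := boxA s q) (Finset.coe_Icc _ _) (n := 8 * s) (by omega)).trans ?_)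
  · intro ω hω
    simp only [Set.mem_compl_iff, Set.mem_ofPred_eq, not_forall, not_le] at hω
    obtain ⟨C, hCB, hC, hfin, u, hu, v, hv, huv⟩ := hω
    exact ⟨C, hCB, hC, hfin, u, hu, v, hv, by omega⟩
  · rw [← ENNReal.ofReal_pow hq.le, ← ENNReal.ofReal_natCast, ← ENNReal.ofReal_mul (by positivity)]
    refine ENNReal.ofReal_le_ofReal ?_
    calc _ = K * (((boxA s q).card : ℝ) * q ^ (2 * s)) * q ^ (6 * s) := by push_cast; ring
      _ ≤ K * 9 * q ^ s := mul_le_mul (by gcongr; exact card_boxA_mul_pow_le hq hq1.le)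
          (pow_le_pow_of_le_one hq.le hq1.le (by omega)) (by positivity) (by positivity)
      _ = 9 * K * q ^ s := by ring
end
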